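/- arXiv:1305.5060 — 9 statements merged into one kernel-verified Lean document; each statement's English description precedes it below -/
import Mathlib

section
/- If a symmetric (0,2)-tensor b is Riemann compatible, i.e. b_{im} R_{jkl}{}^m + b_{jm} R_{kil}{}^m + b_{km} R_{ijl}{}^m = 0, then it is Weyl compatible: b_{im} C_{jkl}{}^m + b_{jm} C_{kil}{}^m + b_{km} C_{ijl}{}^m = 0. -/
/-- (Pointwise linear algebra.) If a symmetric (0,2)-tensor `b` is
Riemann compatible, `b_{im}R_{jkl}{}^m + b_{jm}R_{kil}{}^m + b_{km}R_{ijl}{}^m = 0`,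
then it is Weyl compatible: `b_{im}C_{jkl}{}^m + b_{jm}C_{kil}{}^m + b_{km}C_{ijl}{}^m = 0`,
where `C` is the Weyl tensor built from Riemann, Ricci, the scalar curvature and `g`. -/
theorem riemann_compatible_implies_weyl_compatible
    (n : ℕ) (hn : 3 ≤ n)
    (g ginv : Fin n → Fin n → ℝ)
    (hgsym : ∀ i j, g i j = g j i)
    (hginv : ∀ i j, ∑ m, g i m * ginv m j = if i = j then (1:ℝ) else 0)
    (R : Fin n → Fin n → Fin n → Fin n → ℝ)
    (hR1 : ∀ j k l m, R j k l m = - R k j l m)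
    (hR2 : ∀ j k l m, R j k l m = - R j k m l)
    (hR3 : ∀ j k l m, R j k l m = R l m j k)
    (hR4 : ∀ j k l m, R j k l m + R k l j m + R l j k m = 0)
    (Ric : Fin n → Fin n → ℝ)
    (hRic : ∀ k l, Ric k l = - ∑ m, ∑ p, ginv m p * R m k l p)
    (Rs : ℝ) (hRs : Rs = ∑ k, ∑ l, ginv k l * Ric k l)
    (C : Fin n → Fin n → Fin n → Fin n → ℝ)
    (hC : ∀ j k l m, C j k l m = R j k l m
      + (1 / ((n:ℝ) - 2)) *
        (g m j * Ric k l - g m k * Ric j l + Ric m j * g k l - Ric m k * g j l)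
      - (Rs / (((n:ℝ) - 1) * ((n:ℝ) - 2))) * (g m j * g k l - g m k * g j l))
    (b : Fin n → Fin n → ℝ)
    (hbsym : ∀ i j, b i j = b j i)
    (hcomp : ∀ i j k l,
      (∑ m, ∑ p, ginv m p * b i p * R j k l m)
      + (∑ m, ∑ p, ginv m p * b j p * R k i l m)
      + (∑ m, ∑ p, ginv m p * b k p * R i j l m) = 0) :
    ∀ i j k l,
      (∑ m, ∑ p, ginv m p * b i p * C j k l m)
      + (∑ m, ∑ p, ginv m p * b j p * C k i l m)
      + (∑ m, ∑ p, ginv m p * b k p * C i j l m) = 0 := by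
  -- the inverse metric is symmetric (matrix argument)
  have hginvsym : ∀ i j, ginv i j = ginv j i := by
    set G : Matrix (Fin n) (Fin n) ℝ := Matrix.of g with hG
    set H : Matrix (Fin n) (Fin n) ℝ := Matrix.of ginv with hH
    have hGH : G * H = 1 := by
      ext i j
      simpa [Matrix.mul_apply, hG, hH, Matrix.one_apply] using hginv i j
    have hGt : G.transpose = G := by
      ext i j; exact hgsym j i
    have h1 : H.transpose * G = 1 := by
      calc H.transpose * G = H.transpose * G.transpose := by rw [hGt]
        _ = (G * H).transpose := (Matrix.transpose_mul G H).symm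
        _ = 1 := by rw [hGH, Matrix.transpose_one]
    have hHt : H.transpose = H := by
      calc H.transpose = H.transpose * (G * H) := by rw [hGH, mul_one]
        _ = (H.transpose * G) * H := by rw [mul_assoc]
        _ = H := by rw [h1, one_mul]
    intro i j
    have := congrFun (congrFun hHt j) i
    simpa [Matrix.transpose_apply, hH] using this
  -- contraction of b with g
  have hcontract : ∀ a c, (∑ m, ∑ p, ginv m p * b a p * g m c) = b a c := by
    intro a c
    have step : ∀ m, (∑ p, ginv m p * b a p * g m c)
        = ∑ p, (g c m * ginv m p) * b a p := by
      intro m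
      refine Finset.sum_congr rfl fun p _ => ?_
      rw [hgsym c m]; ring
    calc (∑ m, ∑ p, ginv m p * b a p * g m c)
        = ∑ m, ∑ p, (g c m * ginv m p) * b a p := Finset.sum_congr rfl fun m _ => step m
      _ = ∑ p, (∑ m, g c m * ginv m p) * b a p := by
          rw [Finset.sum_comm]
          exact Finset.sum_congr rfl fun p _ => (Finset.sum_mul _ _ _).symm
      _ = ∑ p, (if c = p then (1:ℝ) else 0) * b a p := by
          exact Finset.sum_congr rfl fun p _ => by rw [hginv c p]
      _ = b a c := by simp
  -- Ricci contraction identity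
  have hS : ∀ c m, (∑ j, ∑ l, ginv j l * R j c l m) = Ric c m := by
    intro c m
    rw [hRic c m]
    rw [← Finset.sum_neg_distrib]
    refine Finset.sum_congr rfl fun j _ => ?_
    rw [← Finset.sum_neg_distrib]
    refine Finset.sum_congr rfl fun l _ => ?_
    rw [hR2 j c l m]; ring
  -- Ricci is symmetric
  have hRicsym : ∀ a c, Ric a c = Ric c a := by
    intro a c
    rw [hRic a c, hRic c a, neg_inj]
    calc (∑ m, ∑ p, ginv m p * R m a c p)
        = ∑ m, ∑ p, ginv m p * R c p m a := by
          refine Finset.sum_congr rfl fun m _ => Finset.sum_congr rfl fun p _ => ?_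
          rw [hR3 m a c p]
      _ = ∑ p, ∑ m, ginv m p * R c p m a := Finset.sum_comm
      _ = ∑ m, ∑ p, ginv p m * R c m p a := rfl
      _ = ∑ m, ∑ p, ginv m p * R m c a p := by
          refine Finset.sum_congr rfl fun m _ => Finset.sum_congr rfl fun p _ => ?_
          rw [hginvsym p m, hR1 c m p a, hR2 m c p a]; ring
  -- sum rearrangement lemmas
  have comm2 : ∀ (f : Fin n → Fin n → ℝ), (∑ x, ∑ y, f x y) = ∑ y, ∑ x, f x y :=
    fun f => Finset.sum_comm
  have swap4 : ∀ (f : Fin n → Fin n → Fin n → Fin n → ℝ),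
      (∑ j, ∑ l, ∑ m, ∑ p, f j l m p) = ∑ m, ∑ p, ∑ j, ∑ l, f j l m p := by
    intro f
    calc (∑ j, ∑ l, ∑ m, ∑ p, f j l m p)
        = ∑ j, ∑ m, ∑ l, ∑ p, f j l m p :=
          Finset.sum_congr rfl fun j _ => comm2 _
      _ = ∑ m, ∑ j, ∑ l, ∑ p, f j l m p := comm2 _
      _ = ∑ m, ∑ j, ∑ p, ∑ l, f j l m p :=
          Finset.sum_congr rfl fun m _ => Finset.sum_congr rfl fun j _ => comm2 _
      _ = ∑ m, ∑ p, ∑ j, ∑ l, f j l m p :=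
          Finset.sum_congr rfl fun m _ => comm2 _
  have swapRev : ∀ (f : Fin n → Fin n → Fin n → Fin n → ℝ),
      (∑ j, ∑ l, ∑ m, ∑ p, f j l m p) = ∑ p, ∑ m, ∑ l, ∑ j, f j l m p := by
    intro f
    calc (∑ j, ∑ l, ∑ m, ∑ p, f j l m p)
        = ∑ j, ∑ l, ∑ p, ∑ m, f j l m p :=
          Finset.sum_congr rfl fun j _ => Finset.sum_congr rfl fun l _ => comm2 _
      _ = ∑ j, ∑ p, ∑ l, ∑ m, f j l m p :=
          Finset.sum_congr rfl fun j _ => comm2 _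
      _ = ∑ p, ∑ j, ∑ l, ∑ m, f j l m p := comm2 _
      _ = ∑ p, ∑ j, ∑ m, ∑ l, f j l m p :=
          Finset.sum_congr rfl fun p _ => Finset.sum_congr rfl fun j _ => comm2 _
      _ = ∑ p, ∑ m, ∑ j, ∑ l, f j l m p :=
          Finset.sum_congr rfl fun p _ => comm2 _
      _ = ∑ p, ∑ m, ∑ l, ∑ j, f j l m p :=
          Finset.sum_congr rfl fun p _ => Finset.sum_congr rfl fun m _ => comm2 _
  -- b commutes with Ricci (trace of the compatibility condition)
  have hBsym : ∀ a c, (∑ m, ∑ p, ginv m p * b a p * Ric m c)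
      = ∑ m, ∑ p, ginv m p * b c p * Ric m a := by
    intro a c
    have hP1 : (∑ j, ∑ l, ∑ m, ∑ p, ginv j l * (ginv m p * b a p * R j c l m))
        = ∑ m, ∑ p, ginv m p * b a p * Ric m c := by
      rw [swap4]
      refine Finset.sum_congr rfl fun m _ => Finset.sum_congr rfl fun p _ => ?_
      calc (∑ j, ∑ l, ginv j l * (ginv m p * b a p * R j c l m))
          = (ginv m p * b a p) * ∑ j, ∑ l, ginv j l * R j c l m := by
            rw [Finset.mul_sum]
            refine Finset.sum_congr rfl fun j _ => ?_
            rw [Finset.mul_sum]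
            exact Finset.sum_congr rfl fun l _ => by ring
        _ = ginv m p * b a p * Ric m c := by rw [hS, hRicsym]
    have hP3 : (∑ j, ∑ l, ∑ m, ∑ p, ginv j l * (ginv m p * b c p * R a j l m))
        = -∑ m, ∑ p, ginv m p * b c p * Ric m a := by
      rw [swap4, ← Finset.sum_neg_distrib]
      refine Finset.sum_congr rfl fun m _ => ?_
      rw [← Finset.sum_neg_distrib]
      refine Finset.sum_congr rfl fun p _ => ?_
      calc (∑ j, ∑ l, ginv j l * (ginv m p * b c p * R a j l m))
          = (-(ginv m p * b c p)) * ∑ j, ∑ l, ginv j l * R j a l m := by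
            rw [Finset.mul_sum]
            refine Finset.sum_congr rfl fun j _ => ?_
            rw [Finset.mul_sum]
            refine Finset.sum_congr rfl fun l _ => ?_
            rw [hR1 a j l m]; ring
        _ = -(ginv m p * b c p * Ric m a) := by rw [hS, hRicsym]; ring
    have hP2 : (∑ j, ∑ l, ∑ m, ∑ p, ginv j l * (ginv m p * b j p * R c a l m)) = 0 := by
      set S := ∑ j, ∑ l, ∑ m, ∑ p, ginv j l * (ginv m p * b j p * R c a l m) with hSdef
      have hneg : S = -S := by
        conv_lhs => rw [hSdef, swapRev]
        rw [hSdef, ← Finset.sum_neg_distrib]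
        refine Finset.sum_congr rfl fun j _ => ?_
        rw [← Finset.sum_neg_distrib]
        refine Finset.sum_congr rfl fun l _ => ?_
        rw [← Finset.sum_neg_distrib]
        refine Finset.sum_congr rfl fun m _ => ?_
        rw [← Finset.sum_neg_distrib]
        refine Finset.sum_congr rfl fun p _ => ?_
        rw [hginvsym p m, hginvsym l j, hbsym p j, hR2 c a m l]
        ring
      linarith
    have h0 : (∑ j, ∑ l, ∑ m, ∑ p, ginv j l * (ginv m p * b a p * R j c l m))
        + (∑ j, ∑ l, ∑ m, ∑ p, ginv j l * (ginv m p * b j p * R c a l m))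
        + (∑ j, ∑ l, ∑ m, ∑ p, ginv j l * (ginv m p * b c p * R a j l m)) = 0 := by
      have expand : ∀ (j l : Fin n),
          (∑ m, ∑ p, ginv j l * (ginv m p * b a p * R j c l m))
          + (∑ m, ∑ p, ginv j l * (ginv m p * b j p * R c a l m))
          + (∑ m, ∑ p, ginv j l * (ginv m p * b c p * R a j l m)) = 0 := by
        intro j l
        have h := hcomp a j c l
        calc (∑ m, ∑ p, ginv j l * (ginv m p * b a p * R j c l m))
            + (∑ m, ∑ p, ginv j l * (ginv m p * b j p * R c a l m))
            + (∑ m, ∑ p, ginv j l * (ginv m p * b c p * R a j l m))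
            = ginv j l * ((∑ m, ∑ p, ginv m p * b a p * R j c l m)
              + (∑ m, ∑ p, ginv m p * b j p * R c a l m)
              + (∑ m, ∑ p, ginv m p * b c p * R a j l m)) := by
              simp only [mul_add, Finset.mul_sum]
          _ = 0 := by rw [h, mul_zero]
      calc (∑ j, ∑ l, ∑ m, ∑ p, ginv j l * (ginv m p * b a p * R j c l m))
          + (∑ j, ∑ l, ∑ m, ∑ p, ginv j l * (ginv m p * b j p * R c a l m))
          + (∑ j, ∑ l, ∑ m, ∑ p, ginv j l * (ginv m p * b c p * R a j l m))
          = ∑ j, ∑ l, ((∑ m, ∑ p, ginv j l * (ginv m p * b a p * R j c l m))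
            + (∑ m, ∑ p, ginv j l * (ginv m p * b j p * R c a l m))
            + (∑ m, ∑ p, ginv j l * (ginv m p * b c p * R a j l m))) := by
            simp only [Finset.sum_add_distrib]
        _ = 0 := by
            rw [Finset.sum_eq_zero]
            intro j _
            rw [Finset.sum_eq_zero]
            intro l _
            exact expand j l
    rw [hP1, hP2, hP3] at h0
    linarith
  -- key expansion: contraction of b with the Weyl tensor
  have hkey : ∀ a c d l, (∑ m, ∑ p, ginv m p * b a p * C c d l m)
      = (∑ m, ∑ p, ginv m p * b a p * R c d l m)
      + (1 / ((n:ℝ) - 2)) *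
        (b a c * Ric d l - b a d * Ric c l
          + (∑ m, ∑ p, ginv m p * b a p * Ric m c) * g d l
          - (∑ m, ∑ p, ginv m p * b a p * Ric m d) * g c l)
      - (Rs / (((n:ℝ) - 1) * ((n:ℝ) - 2))) * (b a c * g d l - b a d * g c l) := by
    intro a c d l
    have expand : ∀ m p, ginv m p * b a p * C c d l m
        = ginv m p * b a p * R c d l m
        + (1 / ((n:ℝ) - 2)) *
          (Ric d l * (ginv m p * b a p * g m c) - Ric c l * (ginv m p * b a p * g m d)
            + g d l * (ginv m p * b a p * Ric m c) - g c l * (ginv m p * b a p * Ric m d))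
        - (Rs / (((n:ℝ) - 1) * ((n:ℝ) - 2))) *
          (g d l * (ginv m p * b a p * g m c) - g c l * (ginv m p * b a p * g m d)) := by
      intro m p; rw [hC]; ring
    calc (∑ m, ∑ p, ginv m p * b a p * C c d l m)
        = (∑ m, ∑ p, ginv m p * b a p * R c d l m)
        + (1 / ((n:ℝ) - 2)) *
          (Ric d l * (∑ m, ∑ p, ginv m p * b a p * g m c)
            - Ric c l * (∑ m, ∑ p, ginv m p * b a p * g m d)
            + g d l * (∑ m, ∑ p, ginv m p * b a p * Ric m c)
            - g c l * (∑ m, ∑ p, ginv m p * b a p * Ric m d))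
        - (Rs / (((n:ℝ) - 1) * ((n:ℝ) - 2))) *
          (g d l * (∑ m, ∑ p, ginv m p * b a p * g m c)
            - g c l * (∑ m, ∑ p, ginv m p * b a p * g m d)) := by
          simp only [expand, Finset.sum_add_distrib, Finset.sum_sub_distrib,
            ← Finset.mul_sum]
      _ = _ := by rw [hcontract a c, hcontract a d]; ring
  intro i j k l
  rw [hkey i j k l, hkey j k i l, hkey k i j l]
  have h := hcomp i j k l
  linear_combination h
    + (1 / ((n:ℝ) - 2)) * Ric k l * hbsym i j
    + (1 / ((n:ℝ) - 2)) * Ric i l * hbsym j k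
    + (1 / ((n:ℝ) - 2)) * Ric j l * hbsym k i
    + (1 / ((n:ℝ) - 2)) * g k l * hBsym i j
    + (1 / ((n:ℝ) - 2)) * g i l * hBsym j k
    + (1 / ((n:ℝ) - 2)) * g j l * hBsym k i
    - (Rs / (((n:ℝ) - 1) * ((n:ℝ) - 2))) * g k l * hbsym i j
    - (Rs / (((n:ℝ) - 1) * ((n:ℝ) - 2))) * g i l * hbsym j k
    - (Rs / (((n:ℝ) - 1) * ((n:ℝ) - 2))) * g j l * hbsym k i
end

section
/- In a (CQR)_n manifold with fundamental vector A, the tensor ∇_i A_m is Weyl compatible: (∇_i A_m) C_{jkl}{}^m + (∇_j A_m) C_{kil}{}^m + (∇_k A_m) C_{ijl}{}^m = 0. -/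
/-- In a (CQR)_n manifold with fundamental vector `A`, from the identity
`(∇ᵢA^m)C_{jklm} + (A^mA_m)C_{jkli} = 0` and the first Bianchi identity of the Weyl
tensor, the tensor `∇ᵢA_m` is Weyl compatible:
`(∇ᵢA_m)C_{jkl}{}^m + (∇ⱼA_m)C_{kil}{}^m + (∇_kA_m)C_{ijl}{}^m = 0`. -/
theorem cqr_nablaA_weyl_compatible
    (M : Type) (n : ℕ) (hn : 3 ≤ n)
    (g ginv : M → Fin n → Fin n → ℝ)
    (hginv : ∀ x i j, ∑ m, g x i m * ginv x m j = if i = j then (1:ℝ) else 0)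
    (C : M → Fin n → Fin n → Fin n → Fin n → ℝ)
    (hC1 : ∀ x j k l m, C x j k l m = - C x k j l m)
    (hC2 : ∀ x j k l m, C x j k l m = - C x j k m l)
    (hC3 : ∀ x j k l m, C x j k l m = C x l m j k)
    (hCB : ∀ x j k l m, C x j k l m + C x k l j m + C x l j k m = 0)
    (A : M → Fin n → ℝ)
    (DA : M → Fin n → Fin n → ℝ)  -- ∇ᵢA_m
    -- the (CQR)_n identity (∇ᵢA^m)C_{jklm} + (A^mA_m)C_{jkli} = 0:
    (hDAC : ∀ x i j k l,
      (∑ m, ∑ p, ginv x m p * DA x i p * C x j k l m)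
      + (∑ m, ∑ p, ginv x m p * A x m * A x p) * C x j k l i = 0) :
    ∀ x i j k l,
      (∑ m, ∑ p, ginv x m p * DA x i p * C x j k l m)
      + (∑ m, ∑ p, ginv x m p * DA x j p * C x k i l m)
      + (∑ m, ∑ p, ginv x m p * DA x k p * C x i j l m) = 0 := by
  intro x i j k l
  have h1 := hDAC x i j k l
  have h2 := hDAC x j k i l
  have h3 := hDAC x k i j l
  set S := (∑ m, ∑ p, ginv x m p * A x m * A x p) with hS
  have e2 : C x k i l j = C x l j k i := hC3 x k i l j
  have e3 : C x i j l k = C x k l j i := by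
    rw [hC3 x i j l k, hC1 x l k i j, hC2 x k l i j]; ring
  have hB := hCB x j k l i
  linear_combination h1 + h2 + h3 - S * hB - S * e2 - S * e3
end

section
/- In a (CQR)_n manifold with Γ^q{}_q = C² nonzero, the rescaled tensor |Γ|^{-3/4} Γ_{pq} is a Codazzi tensor: ∇_i (|Γ|^{-3/4} Γ_{jq}) = ∇_j (|Γ|^{-3/4} Γ_{iq}), where |Γ| denotes |C²| and A_i = (1/4)∇_i log|Γ|. -/
/-- In a (CQR)_n manifold with `Γ^q{}_q = C²` nowhere zero (so
`Aᵢ = (1/4)∇ᵢ log|Γ|`), the rescaled tensor `|Γ|^{-3/4}Γ_{pq}` is a Codazzi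
tensor: `∇ᵢ(|Γ|^{-3/4}Γ_{jq}) = ∇ⱼ(|Γ|^{-3/4}Γ_{iq})`. -/
theorem cqr_rescaled_gamma_codazzi
    (M : Type) (n : ℕ) (hn : 3 ≤ n)
    (A : M → Fin n → ℝ)
    (Γ : M → Fin n → Fin n → ℝ)
    (hΓsym : ∀ x p r, Γ x p r = Γ x r p)
    (trΓ : M → ℝ)  -- Γ^q{}_q = C²
    (htr : ∀ x, trΓ x ≠ 0)
    (DΓ : M → Fin n → Fin n → Fin n → ℝ)  -- ∇ᵢΓ_{pr}
    -- the (CQR)_n consequence ∇ⱼΓ_{kl} - ∇_kΓ_{jl} = 3AⱼΓ_{kl} - 3A_kΓ_{jl}: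
    (hskew : ∀ x j k l, DΓ x j k l - DΓ x k j l =
      3 * A x j * Γ x k l - 3 * A x k * Γ x j l)
    (Dresc : M → Fin n → Fin n → Fin n → ℝ)  -- ∇ᵢ(|Γ|^{-3/4} Γ_{jq})
    (Df : M → Fin n → ℝ)                      -- ∇ᵢ(|Γ|^{-3/4})
    -- Aᵢ = (1/4)∇ᵢ log|Γ|, expressed through the chain rule for |Γ|^{-3/4}:
    (hchain : ∀ x i, Df x i = -3 * A x i * |trΓ x| ^ (-(3:ℝ)/4))
    -- Leibniz rule:
    (hLeib : ∀ x i j q, Dresc x i j q =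
      Df x i * Γ x j q + |trΓ x| ^ (-(3:ℝ)/4) * DΓ x i j q) :
    ∀ x i j q, Dresc x i j q = Dresc x j i q := by
  intro x i j q
  rw [hLeib, hLeib, hchain, hchain]
  linear_combination |trΓ x| ^ (-(3:ℝ)/4) * hskew x i j q
end

section
/- In a (CQR)_n manifold, if the fundamental vector A is concircular, ∇_s A_i = A_s A_i + γ g_{si}, then γ = -A_m A^m and γ is constant; moreover the divergence satisfies ∇_s A^s = A_sA^s + nγ = (n-1)γ. -/
open Matrix in
private lemma ginv_symm_aux {n : ℕ} (G H : Matrix (Fin n) (Fin n) ℝ)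
    (hGT : Gᵀ = G) (hGH : G * H = 1) : Hᵀ = H := by
  have h1 : Hᵀ * G = 1 := by
    have := congrArg Matrix.transpose hGH
    rw [Matrix.transpose_mul, hGT] at this
    simpa using this
  calc Hᵀ = Hᵀ * (G * H) := by rw [hGH, mul_one]
    _ = (Hᵀ * G) * H := by rw [mul_assoc]
    _ = H := by rw [h1, one_mul]

/-- In a non conformally flat (CQR)_n manifold whose fundamental
vector is concircular, `∇_sAᵢ = A_sAᵢ + γ g_{si}`, one has `γ = -A_mA^m`, γ is
constant (`∇γ = 0`), and `∇_sA^s = A_sA^s + nγ = (n-1)γ`. -/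
theorem cqr_concircular_gamma
    (M : Type) (n : ℕ) (hn : 3 ≤ n)
    (g ginv : M → Fin n → Fin n → ℝ)
    (hgsym : ∀ x i j, g x i j = g x j i)
    (hginv : ∀ x i j, ∑ m, g x i m * ginv x m j = if i = j then (1:ℝ) else 0)
    (C : M → Fin n → Fin n → Fin n → Fin n → ℝ)
    -- non conformally flat: the Weyl tensor is nowhere zero:
    (hCne : ∀ x, ∃ j k l m, C x j k l m ≠ 0)
    (A : M → Fin n → ℝ)
    (DA : M → Fin n → Fin n → ℝ)  -- ∇_sAᵢ
    (γ : M → ℝ)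
    (hconc : ∀ x s i, DA x s i = A x s * A x i + γ x * g x s i)
    (hAC : ∀ x j k l, ∑ m, ∑ p, ginv x m p * A x p * C x j k l m = 0)
    -- the (CQR)_n identity (∇ᵢA^m)C_{jklm} + (A^mA_m)C_{jkli} = 0:
    (hDAC : ∀ x i j k l,
      (∑ m, ∑ p, ginv x m p * DA x i p * C x j k l m)
      + (∑ m, ∑ p, ginv x m p * A x m * A x p) * C x j k l i = 0)
    (d : (M → ℝ) → M → Fin n → ℝ)  -- differential of scalar fields
    (hd_neg : ∀ f : M → ℝ, ∀ x i, d (fun y => -(f y)) x i = -(d f x i))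
    -- Leibniz rule and metric compatibility applied to A_mA^m:
    (hdA : ∀ x i, d (fun y => ∑ m, ∑ p, ginv y m p * A y m * A y p) x i =
      2 * ∑ m, ∑ p, ginv x m p * A x p * DA x i m) :
    (∀ x, γ x = -(∑ m, ∑ p, ginv x m p * A x m * A x p)) ∧
    (∀ x i, d γ x i = 0) ∧
    (∀ x, ∑ s, ∑ i, ginv x s i * DA x s i = ((n:ℝ) - 1) * γ x) := by
  -- symmetry of ginv
  have hisym : ∀ x i j, ginv x i j = ginv x j i := by
    intro x i j
    have h := ginv_symm_aux (fun a b => g x a b) (fun a b => ginv x a b)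
      (by ext a b; exact hgsym x b a)
      (by ext a b; exact (hginv x a b).trans (Matrix.one_apply (i := a) (j := b)).symm)
    exact congrFun (congrFun h j) i
  have hginv' : ∀ x i j, ∑ p, ginv x i p * g x j p = if j = i then (1:ℝ) else 0 := by
    intro x i j
    rw [← hginv x j i]
    apply Finset.sum_congr rfl
    intro p _
    rw [hisym x i p]; ring
  -- key: (γ + |A|²) C = 0
  have hkey : ∀ x j k l i,
      (γ x + ∑ m, ∑ p, ginv x m p * A x m * A x p) * C x j k l i = 0 := by
    intro x j k l i
    have h := hDAC x i j k l
    have e1 : (∑ m, ∑ p, ginv x m p * DA x i p * C x j k l m)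
        = (∑ m, ∑ p, ginv x m p * A x p * C x j k l m) * A x i
          + γ x * C x j k l i := by
      have step : (∑ m, ∑ p, ginv x m p * DA x i p * C x j k l m)
          = ∑ m, ((∑ p, ginv x m p * A x p * C x j k l m) * A x i
              + γ x * C x j k l m * (∑ p, ginv x m p * g x i p)) := by
        apply Finset.sum_congr rfl
        intro m _
        rw [Finset.sum_mul, Finset.mul_sum, ← Finset.sum_add_distrib]
        apply Finset.sum_congr rfl
        intro p _
        rw [hconc]; ring
      rw [step, Finset.sum_add_distrib, ← Finset.sum_mul]
      congr 1
      have h2 : ∀ m, γ x * C x j k l m * (∑ p, ginv x m p * g x i p)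
          = γ x * C x j k l m * (if i = m then (1:ℝ) else 0) := by
        intro m; rw [hginv' x m i]
      rw [Finset.sum_congr rfl (fun m _ => h2 m)]
      simp
    rw [e1, hAC x j k l, zero_mul, zero_add] at h
    linarith [h, mul_comm
      (γ x + ∑ m, ∑ p, ginv x m p * A x m * A x p) (C x j k l i)]
  -- first part
  have part1 : ∀ x, γ x = -(∑ m, ∑ p, ginv x m p * A x m * A x p) := by
    intro x
    obtain ⟨j, k, l, m, hC⟩ := hCne x
    have h := hkey x j k l m
    rcases mul_eq_zero.mp h with h' | h'
    · linarith
    · exact absurd h' hC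
  refine ⟨part1, ?_, ?_⟩
  · -- dγ = 0
    intro x i
    have hγfun : γ = fun y => -(∑ m, ∑ p, ginv y m p * A y m * A y p) :=
      funext fun y => part1 y
    rw [hγfun, hd_neg, hdA]
    have e2' : (∑ m, ∑ p, γ x * A x p * (g x i m * ginv x m p))
        = γ x * A x i := by
      rw [Finset.sum_comm]
      have h3 : ∀ p, (∑ m, γ x * A x p * (g x i m * ginv x m p))
          = γ x * A x p * (if i = p then (1:ℝ) else 0) := by
        intro p; rw [← Finset.mul_sum, hginv x i p]
      rw [Finset.sum_congr rfl (fun p _ => h3 p)]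
      simp
    have step : (∑ m, ∑ p, ginv x m p * A x p * DA x i m)
        = ∑ m, ((∑ p, ginv x m p * A x m * A x p) * A x i
            + ∑ p, γ x * A x p * (g x i m * ginv x m p)) := by
      apply Finset.sum_congr rfl
      intro m _
      rw [Finset.sum_mul, ← Finset.sum_add_distrib]
      apply Finset.sum_congr rfl
      intro p _
      rw [hconc]; ring
    have hT : (∑ m, ∑ p, ginv x m p * A x p * DA x i m) = 0 := by
      rw [step, Finset.sum_add_distrib, ← Finset.sum_mul, e2']
      have hS : (∑ m, ∑ p, ginv x m p * A x m * A x p) = -(γ x) := by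
        have := part1 x; linarith
      rw [hS]; ring
    rw [hT]; ring
  · -- divergence
    intro x
    have step : (∑ s, ∑ i, ginv x s i * DA x s i)
        = ∑ s, ((∑ i, ginv x s i * A x s * A x i)
            + ∑ i, γ x * (ginv x s i * g x s i)) := by
      apply Finset.sum_congr rfl
      intro s _
      rw [← Finset.sum_add_distrib]
      apply Finset.sum_congr rfl
      intro i _
      rw [hconc]; ring
    rw [step, Finset.sum_add_distrib]
    have htr : (∑ s, ∑ i, γ x * (ginv x s i * g x s i)) = (n : ℝ) * γ x := by
      have e3 : ∀ s : Fin n, (∑ i, γ x * (ginv x s i * g x s i)) = γ x := by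
        intro s
        have h := hginv' x s s
        simp at h
        rw [← Finset.mul_sum, h, mul_one]
      rw [Finset.sum_congr rfl (fun s _ => e3 s)]
      simp [mul_comm]
    rw [htr]
    have := part1 x
    have hS : (∑ s, ∑ i, ginv x s i * A x s * A x i) = -(γ x) := by linarith
    rw [hS]; ring
end

section
/- In a (CQR)_n manifold with concircular fundamental vector A (∇_s A_i = A_s A_i + γ g_{si}) with γ ≠ 0 (so A_mA^m = -γ ≠ 0), the Ricci tensor has the quasi-Einstein form R_{kl} = (A_k A_l / A_m A^m)(nγ - R/(n-1)) + g_{kl}(R/(n-1) - γ). -/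
/-!
Contracting the Weyl tensor with `A^m` and using the integrability condition gives
`A_j R_kl - A_k R_jl = V_j g_kl - V_k g_jl` with `V = κ A - B`, `B_l = A^m R_ml` and
`κ = (n-2)γ + R/(n-1)`. The trace over `(j, l)` and the contraction with `A^l` together give
`(n-2) (A_j B_k - A_k B_j) = 0`, so `B = μ A`. The contraction with `A^j` then puts the Ricci
tensor in the quasi-Einstein form `R_kl = (κ-μ) g_kl + (2μ-κ) A_k A_l / A_mA^m`, and its trace
forces `μ = (n-1)γ`.
-/

open Finset Matrix

namespace CQR

theorem exists_eq_smul_of_mul_eq_mul {ι K : Type*} [Field K] {A B : ι → K} (hA : A ≠ 0)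
    (h : ∀ j k, A j * B k = A k * B j) : ∃ μ : K, B = μ • A := by
  obtain ⟨j, hj⟩ : ∃ j, A j ≠ 0 := Function.ne_iff.1 hA
  refine ⟨B j / A j, funext fun k => ?_⟩
  simp only [Pi.smul_apply, smul_eq_mul]
  field_simp
  linear_combination h j k

variable {ι K : Type*} [Fintype ι] [Field K]

def metricTrace (ginv T : Matrix ι ι K) : K := ∑ j, ∑ l, ginv j l * T j l

section Metric

variable {g ginv : Matrix ι ι K}

theorem mul_eq_one_of_sum_mul_eq_ite [DecidableEq ι]
    (h : ∀ i j, ∑ m, g i m * ginv m j = if i = j then (1 : K) else 0) : g * ginv = 1 := by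
  ext i j
  simpa [mul_apply, one_apply] using h i j

theorem transpose_eq_of_mul_eq_one [DecidableEq ι] (hg : gᵀ = g) (hgi : g * ginv = 1) :
    ginvᵀ = ginv := by
  rw [← inv_eq_right_inv hgi, transpose_nonsing_inv, hg]

theorem mulVec_dotProduct_row [DecidableEq ι] (hgi : g * ginv = 1) (v : ι → K) (j : ι) :
    (ginv *ᵥ v) ⬝ᵥ g j = v j := by
  rw [dotProduct_comm]
  change (g *ᵥ (ginv *ᵥ v)) j = v j
  rw [mulVec_mulVec, hgi, one_mulVec]

theorem metricTrace_sub (T S : Matrix ι ι K) :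
    metricTrace ginv (T - S) = metricTrace ginv T - metricTrace ginv S := by
  simp [metricTrace, mul_sub, sum_sub_distrib]

theorem metricTrace_add (T S : Matrix ι ι K) :
    metricTrace ginv (T + S) = metricTrace ginv T + metricTrace ginv S := by
  simp [metricTrace, mul_add, sum_add_distrib]

theorem metricTrace_smul (c : K) (T : Matrix ι ι K) :
    metricTrace ginv (c • T) = c * metricTrace ginv T := by
  simp [metricTrace, mul_sum, mul_left_comm]

theorem metricTrace_vecMulVec (hsym : ginvᵀ = ginv) (v w : ι → K) :
    metricTrace ginv (vecMulVec v w) = (ginv *ᵥ v) ⬝ᵥ w := by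
  rw [metricTrace, sum_comm]
  refine sum_congr rfl fun l _ => ?_
  simp only [vecMulVec_apply, mulVec, dotProduct, sum_mul, mul_assoc]
  exact sum_congr rfl fun j _ => by rw [← congrFun (congrFun hsym j) l, transpose_apply]

theorem metricTrace_metric [DecidableEq ι] (hg : gᵀ = g) (hgi : g * ginv = 1) :
    metricTrace ginv g = Fintype.card ι := by
  have : metricTrace ginv g = trace (g * ginv) := by
    refine sum_congr rfl fun j _ => sum_congr rfl fun l _ => ?_
    have hs : ginv j l = ginv l j := congrFun (congrFun (transpose_eq_of_mul_eq_one hg hgi) l) j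
    exact (mul_comm _ _).trans (congrArg _ hs)
  rw [this, hgi, trace_one]

end Metric

def IsQuasiEinstein (g Ric : Matrix ι ι K) (A : ι → K) (α β : K) : Prop :=
  ∀ k l, Ric k l = α * g k l + β * (A k * A l)

theorem IsQuasiEinstein.metricTrace_eq [DecidableEq ι] {g ginv Ric : Matrix ι ι K} {A : ι → K}
    {α β : K} (h : IsQuasiEinstein g Ric A α β) (hg : gᵀ = g) (hgi : g * ginv = 1) :
    metricTrace ginv Ric = α * Fintype.card ι + β * ((ginv *ᵥ A) ⬝ᵥ A) := by
  have hRic : Ric = α • g + β • vecMulVec A A := by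
    ext k l
    simp [h k l, vecMulVec_apply]
  rw [hRic, metricTrace_add, metricTrace_smul, metricTrace_smul, metricTrace_metric hg hgi,
    metricTrace_vecMulVec (transpose_eq_of_mul_eq_one hg hgi)]

def WedgeIdentity (g Ric : Matrix ι ι K) (A V : ι → K) : Prop :=
  ∀ j k l, A j * Ric k l - A k * Ric j l = V j * g k l - V k * g j l

section Wedge

variable [DecidableEq ι] {g ginv Ric : Matrix ι ι K} {A V : ι → K}

theorem metricTrace_wedge (hg : gᵀ = g) (hgi : g * ginv = 1)
    (hwedge : WedgeIdentity g Ric A V) (k : ι) :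
    (ginv *ᵥ A) ⬝ᵥ Ric k - A k * metricTrace ginv Ric = V k - Fintype.card ι * V k := by
  have hk : vecMulVec A (Ric k) - A k • Ric = vecMulVec V (g k) - V k • g := by
    ext j l
    simpa [vecMulVec_apply] using hwedge j k l
  have hsym := transpose_eq_of_mul_eq_one hg hgi
  have := congrArg (metricTrace ginv) hk
  rwa [metricTrace_sub, metricTrace_sub, metricTrace_smul, metricTrace_smul,
    metricTrace_vecMulVec hsym, metricTrace_vecMulVec hsym, mulVec_dotProduct_row hgi,
    metricTrace_metric hg hgi, mul_comm (V k)] at this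

theorem wedge_contract_last (hgi : g * ginv = 1)
    (hwedge : WedgeIdentity g Ric A V) (j k : ι) :
    A j * ((ginv *ᵥ A) ⬝ᵥ Ric k) - A k * ((ginv *ᵥ A) ⬝ᵥ Ric j) = V j * A k - V k * A j := by
  have h : A j • Ric k - A k • Ric j = V j • g k - V k • g j := by
    ext l
    simpa using hwedge j k l
  simpa [dotProduct_sub, dotProduct_smul, mulVec_dotProduct_row hgi] using
    congrArg ((ginv *ᵥ A) ⬝ᵥ ·) h

theorem wedge_contract_first (hg : gᵀ = g) (hgi : g * ginv = 1)
    (hwedge : WedgeIdentity g Ric A V) (k l : ι) :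
    ((ginv *ᵥ A) ⬝ᵥ A) * Ric k l - A k * ((ginv *ᵥ A) ᵥ* Ric) l
      = ((ginv *ᵥ A) ⬝ᵥ V) * g k l - V k * A l := by
  have h : Ric k l • A - A k • Ric.col l = g k l • V - V k • g l := by
    ext j
    have hgs : g l j = g j l := congrFun (congrFun hg j) l
    simp only [Pi.sub_apply, Pi.smul_apply, smul_eq_mul, col_apply, hgs]
    linear_combination hwedge j k l
  have := congrArg ((ginv *ᵥ A) ⬝ᵥ ·) h
  simp only [dotProduct_sub, dotProduct_smul, smul_eq_mul, ← vecMul_apply,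
    mulVec_dotProduct_row hgi] at this
  linear_combination this

theorem exists_vecMul_eq_smul_of_wedge (κ : K) (hg : gᵀ = g) (hgi : g * ginv = 1)
    (hn : (Fintype.card ι : K) - 2 ≠ 0) (hA : A ≠ 0)
    (hwedge : WedgeIdentity g Ric A (κ • A - (ginv *ᵥ A) ᵥ* Ric)) :
    ∃ μ : K, (ginv *ᵥ A) ᵥ* Ric = μ • A := by
  refine exists_eq_smul_of_mul_eq_mul hA fun j k => ?_
  have h1j := metricTrace_wedge hg hgi hwedge j
  have h1k := metricTrace_wedge hg hgi hwedge k
  have h2 := wedge_contract_last hgi hwedge j k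
  simp only [Pi.sub_apply, Pi.smul_apply, smul_eq_mul] at h1j h1k h2
  apply mul_left_cancel₀ hn
  linear_combination h2 - A j * h1k + A k * h1j

theorem isQuasiEinstein_of_wedge (κ μ : K) (hg : gᵀ = g) (hgi : g * ginv = 1)
    (hA : (ginv *ᵥ A) ⬝ᵥ A ≠ 0) (hμ : (ginv *ᵥ A) ᵥ* Ric = μ • A)
    (hwedge : WedgeIdentity g Ric A (κ • A - (ginv *ᵥ A) ᵥ* Ric)) :
    IsQuasiEinstein g Ric A (κ - μ) ((2 * μ - κ) / ((ginv *ᵥ A) ⬝ᵥ A)) := by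
  intro k l
  have h := wedge_contract_first hg hgi hwedge k l
  simp only [hμ, dotProduct_sub, dotProduct_smul, Pi.sub_apply, Pi.smul_apply, smul_eq_mul] at h
  field_simp
  linear_combination h

theorem wedge_of_contracted_weyl {R C : ι → ι → ι → ι → K} {d Rs γ : K}
    (hg : gᵀ = g) (hgi : g * ginv = 1) (hd : d - 2 ≠ 0)
    (hC : ∀ j k l m, C j k l m = R j k l m
      + (1 / (d - 2)) *
        (g m j * Ric k l - g m k * Ric j l + Ric m j * g k l - Ric m k * g j l)
      - (Rs / ((d - 1) * (d - 2))) * (g m j * g k l - g m k * g j l))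
    (hR : ∀ j k l, (ginv *ᵥ A) ⬝ᵥ R j k l = γ * (A k * g j l - A j * g k l))
    (hAC : ∀ j k l, (ginv *ᵥ A) ⬝ᵥ C j k l = 0) :
    WedgeIdentity g Ric A (((d - 2) * γ + Rs / (d - 1)) • A - (ginv *ᵥ A) ᵥ* Ric) := by
  intro j k l
  have hgs : ∀ a b, g a b = g b a := fun a b => congrFun (congrFun hg b) a
  have hCjkl : C j k l = R j k l
      + (1 / (d - 2)) • (Ric k l • g j - Ric j l • g k + g k l • Ric.col j - g j l • Ric.col k)
      - (Rs / ((d - 1) * (d - 2))) • (g k l • g j - g j l • g k) := by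
    ext m
    rw [hC, hgs m j, hgs m k]
    simp only [Pi.add_apply, Pi.sub_apply, Pi.smul_apply, smul_eq_mul, col_apply]
    ring
  have h := hAC j k l
  rw [hCjkl] at h
  simp only [dotProduct_add, dotProduct_sub, dotProduct_smul, smul_eq_mul, hR, ← vecMul_apply,
    mulVec_dotProduct_row hgi] at h
  simp only [Pi.sub_apply, Pi.smul_apply, smul_eq_mul]
  field_simp at h
  linear_combination h

end Wedge

end CQR

open CQR in
theorem cqr_concircular_quasi_einstein_general
    (n : ℕ) (hn : 4 ≤ n)
    (g ginv : Fin n → Fin n → ℝ)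
    (hgsym : ∀ i j, g i j = g j i)
    (hginv : ∀ i j, ∑ m, g i m * ginv m j = if i = j then (1:ℝ) else 0)
    (R : Fin n → Fin n → Fin n → Fin n → ℝ)
    (Ric : Fin n → Fin n → ℝ)
    (Rs : ℝ) (hRs : Rs = ∑ k, ∑ l, ginv k l * Ric k l)
    (C : Fin n → Fin n → Fin n → Fin n → ℝ)
    (hC : ∀ j k l m, C j k l m = R j k l m
      + (1 / ((n:ℝ) - 2)) *
        (g m j * Ric k l - g m k * Ric j l + Ric m j * g k l - Ric m k * g j l)
      - (Rs / (((n:ℝ) - 1) * ((n:ℝ) - 2))) * (g m j * g k l - g m k * g j l))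
    (A : Fin n → ℝ) (γ : ℝ) (hγ : γ ≠ 0)
    (hnull : ∑ m, ∑ p, ginv m p * A m * A p = -γ)
    -- integrability condition of concircularity:
    (hint : ∀ j k l, ∑ m, ∑ p, ginv m p * A p * R j k l m =
      γ * (A k * g j l - A j * g k l))
    (hAC : ∀ j k l, ∑ m, ∑ p, ginv m p * A p * C j k l m = 0) :
    ∀ k l, Ric k l =
      (A k * A l / (∑ m, ∑ p, ginv m p * A m * A p)) * ((n:ℝ) * γ - Rs / ((n:ℝ) - 1))
      + g k l * (Rs / ((n:ℝ) - 1) - γ) := by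
  have hn4 : (4 : ℝ) ≤ n := by exact_mod_cast hn
  have hn1 : (n : ℝ) - 1 ≠ 0 := (by linarith : (0 : ℝ) < n - 1).ne'
  have hn2 : (n : ℝ) - 2 ≠ 0 := (by linarith : (0 : ℝ) < n - 2).ne'
  have hg : (g : Matrix (Fin n) (Fin n) ℝ)ᵀ = g := funext fun i => funext fun j => hgsym j i
  have hgi := mul_eq_one_of_sum_mul_eq_ite hginv
  have hcontract : ∀ T : Fin n → ℝ, ∑ m, ∑ p, ginv m p * A p * T m = (ginv *ᵥ A) ⬝ᵥ T :=
    fun T => by simp [dotProduct, mulVec, sum_mul]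
  have hAA : (ginv *ᵥ A) ⬝ᵥ A = -γ := by
    rw [← hcontract, ← hnull]
    exact sum_congr rfl fun m _ => sum_congr rfl fun p _ => by ring
  have hwedge := wedge_of_contracted_weyl hg hgi hn2 hC
    (fun j k l => (hcontract _).symm.trans (hint j k l))
    (fun j k l => (hcontract _).symm.trans (hAC j k l))
  have hA : A ≠ 0 := by
    rintro rfl
    exact hγ (by simpa using hAA)
  obtain ⟨μ, hμ⟩ := exists_vecMul_eq_smul_of_wedge _ hg hgi (by simpa using hn2) hA hwedge
  have hQE := isQuasiEinstein_of_wedge _ μ hg hgi (by rw [hAA]; exact neg_ne_zero.2 hγ) hμ hwedge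
  have hμγ : μ = (n - 1) * γ := by
    have htr := hRs.trans (hQE.metricTrace_eq hg hgi)
    rw [hAA, Fintype.card_fin] at htr
    field_simp at htr
    apply mul_left_cancel₀ (mul_ne_zero hn1 hn2)
    linear_combination htr
  intro k l
  rw [hnull, hQE k l, hμγ, hAA]
  field_simp
  ring

/-- In a non conformally flat (CQR)_n manifold with concircular
fundamental vector `A` (with constant `γ = -A_mA^m ≠ 0`), the Ricci tensor has the
quasi-Einstein form
`R_{kl} = (A_kA_l/(A_mA^m))(nγ - R/(n-1)) + g_{kl}(R/(n-1) - γ)`.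
(Pointwise statement; the integrability condition of concircularity and the Weyl
tensor formula are supplied as hypotheses.) -/
theorem cqr_concircular_quasi_einstein
    (n : ℕ) (hn : 4 ≤ n)
    (g ginv : Fin n → Fin n → ℝ)
    (hgsym : ∀ i j, g i j = g j i)
    (hginv : ∀ i j, ∑ m, g i m * ginv m j = if i = j then (1:ℝ) else 0)
    (R : Fin n → Fin n → Fin n → Fin n → ℝ)
    (Ric : Fin n → Fin n → ℝ)
    (hRic : ∀ k l, Ric k l = - ∑ m, ∑ p, ginv m p * R m k l p)
    (Rs : ℝ) (hRs : Rs = ∑ k, ∑ l, ginv k l * Ric k l)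
    (C : Fin n → Fin n → Fin n → Fin n → ℝ)
    (hC : ∀ j k l m, C j k l m = R j k l m
      + (1 / ((n:ℝ) - 2)) *
        (g m j * Ric k l - g m k * Ric j l + Ric m j * g k l - Ric m k * g j l)
      - (Rs / (((n:ℝ) - 1) * ((n:ℝ) - 2))) * (g m j * g k l - g m k * g j l))
    (A : Fin n → ℝ) (γ : ℝ) (hγ : γ ≠ 0)
    (hnull : ∑ m, ∑ p, ginv m p * A m * A p = -γ)
    -- integrability condition of concircularity:
    (hint : ∀ j k l, ∑ m, ∑ p, ginv m p * A p * R j k l m =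
      γ * (A k * g j l - A j * g k l))
    (hAC : ∀ j k l, ∑ m, ∑ p, ginv m p * A p * C j k l m = 0) :
    ∀ k l, Ric k l =
      (A k * A l / (∑ m, ∑ p, ginv m p * A m * A p)) * ((n:ℝ) * γ - Rs / ((n:ℝ) - 1))
      + g k l * (Rs / ((n:ℝ) - 1) - γ) :=
  cqr_concircular_quasi_einstein_general n hn g ginv hgsym hginv R Ric Rs hRs C hC A γ hγ hnull hint
    hAC
end

section
/- Let (M,g) be a non conformally flat pseudo-Riemannian manifold with a vector field A such that A_i C_{jklm} + A_j C_{kilm} + A_k C_{ijlm} = 0 at a point where A ≠ 0. Then A_i A^i = 0 and A^m C_{jklm} = 0. -/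
/-- (Pointwise.) In a non conformally flat pseudo-Riemannian manifold,
if a vector `A ≠ 0` satisfies `AᵢC_{jklm} + AⱼC_{kilm} + A_kC_{ijlm} = 0`, then
`AᵢA^i = 0` and `A^mC_{jklm} = 0`. -/
theorem cyclic_weyl_condition_null
    (n : ℕ) (hn : 4 ≤ n)
    (g ginv : Fin n → Fin n → ℝ)
    (hgsym : ∀ i j, g i j = g j i)
    (hginv : ∀ i j, ∑ m, g i m * ginv m j = if i = j then (1:ℝ) else 0)
    (C : Fin n → Fin n → Fin n → Fin n → ℝ)
    (hC1 : ∀ j k l m, C j k l m = - C k j l m)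
    (hC2 : ∀ j k l m, C j k l m = - C j k m l)
    (hC3 : ∀ j k l m, C j k l m = C l m j k)
    (hCB : ∀ j k l m, C j k l m + C k l j m + C l j k m = 0)
    (htrace : ∀ k m, ∑ j, ∑ l, ginv j l * C j k l m = 0)
    (hCne : ∃ j k l m, C j k l m ≠ 0)
    (A : Fin n → ℝ) (hAne : ∃ i, A i ≠ 0)
    (hcyc : ∀ i j k l m,
      A i * C j k l m + A j * C k i l m + A k * C i j l m = 0) :
    (∑ i, ∑ p, ginv i p * A i * A p = 0) ∧
    (∀ j k l, ∑ m, ∑ p, ginv m p * A p * C j k l m = 0) := by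
  -- ginv is symmetric
  have hMg : (Matrix.of g) * (Matrix.of ginv) = 1 := by
    ext i j
    simpa [Matrix.mul_apply, Matrix.one_apply] using hginv i j
  have hginvsym : ∀ i j, ginv i j = ginv j i := by
    have h1 : (Matrix.of ginv).transpose * (Matrix.of g) = 1 := by
      have h := congrArg Matrix.transpose hMg
      rw [Matrix.transpose_mul, Matrix.transpose_one] at h
      have hgT : (Matrix.of g).transpose = Matrix.of g := by
        ext i j; simpa using hgsym j i
      rwa [hgT] at h
    have h2 : (Matrix.of ginv).transpose = Matrix.of ginv := by
      calc (Matrix.of ginv).transpose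
          = (Matrix.of ginv).transpose * ((Matrix.of g) * (Matrix.of ginv)) := by
            rw [hMg, mul_one]
        _ = ((Matrix.of ginv).transpose * (Matrix.of g)) * (Matrix.of ginv) := by
            rw [mul_assoc]
        _ = Matrix.of ginv := by rw [h1, one_mul]
    intro i j
    have := congrFun (congrFun h2 j) i
    simpa [Matrix.transpose_apply] using this
  -- contraction of C with A on the third index vanishes
  have key : ∀ j k m, ∑ l, ∑ i, ginv l i * A i * C j k l m = 0 := by
    intro j k m
    have h0 : ∑ i, ∑ l, ginv i l * (A i * C j k l m + A j * C k i l m + A k * C i j l m) = 0 := by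
      apply Finset.sum_eq_zero; intro i _
      apply Finset.sum_eq_zero; intro l _
      rw [hcyc i j k l m, mul_zero]
    have t2 : ∑ i, ∑ l, ginv i l * (A j * C k i l m) = 0 := by
      calc ∑ i, ∑ l, ginv i l * (A j * C k i l m)
          = ∑ i, ∑ l, A j * -(ginv i l * C i k l m) := by
            apply Finset.sum_congr rfl; intro i _
            apply Finset.sum_congr rfl; intro l _
            rw [hC1 k i l m]; ring
        _ = A j * -(∑ i, ∑ l, ginv i l * C i k l m) := by
            simp [Finset.mul_sum]
        _ = 0 := by rw [htrace k m]; ring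
    have t3 : ∑ i, ∑ l, ginv i l * (A k * C i j l m) = 0 := by
      calc ∑ i, ∑ l, ginv i l * (A k * C i j l m)
          = ∑ i, ∑ l, A k * (ginv i l * C i j l m) := by
            apply Finset.sum_congr rfl; intro i _
            apply Finset.sum_congr rfl; intro l _
            ring
        _ = A k * (∑ i, ∑ l, ginv i l * C i j l m) := by
            simp [Finset.mul_sum]
        _ = 0 := by rw [htrace j m]; ring
    have h1 : ∑ i, ∑ l, ginv i l * (A i * C j k l m) = 0 := by
      have hsplit : ∑ i, ∑ l, ginv i l * (A i * C j k l m + A j * C k i l m + A k * C i j l m)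
          = (∑ i, ∑ l, ginv i l * (A i * C j k l m))
            + (∑ i, ∑ l, ginv i l * (A j * C k i l m))
            + (∑ i, ∑ l, ginv i l * (A k * C i j l m)) := by
        rw [← Finset.sum_add_distrib, ← Finset.sum_add_distrib]
        apply Finset.sum_congr rfl; intro i _
        rw [← Finset.sum_add_distrib, ← Finset.sum_add_distrib]
        apply Finset.sum_congr rfl; intro l _
        ring
      rw [hsplit, t2, t3] at h0
      linarith
    calc ∑ l, ∑ i, ginv l i * A i * C j k l m
        = ∑ i, ∑ l, ginv l i * A i * C j k l m := Finset.sum_comm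
      _ = ∑ i, ∑ l, ginv i l * (A i * C j k l m) := by
          apply Finset.sum_congr rfl; intro i _
          apply Finset.sum_congr rfl; intro l _
          rw [hginvsym l i]; ring
      _ = 0 := h1
  -- the second conclusion: contraction on the fourth index vanishes
  have hF : ∀ j k l, ∑ m, ∑ p, ginv m p * A p * C j k l m = 0 := by
    intro j k l
    calc ∑ m, ∑ p, ginv m p * A p * C j k l m
        = ∑ m, ∑ p, -(ginv m p * A p * C j k m l) := by
          apply Finset.sum_congr rfl; intro m _
          apply Finset.sum_congr rfl; intro p _
          rw [hC2 j k l m]; ring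
      _ = -(∑ m, ∑ p, ginv m p * A p * C j k m l) := by
          simp
      _ = 0 := by rw [key j k l, neg_zero]
  refine ⟨?_, hF⟩
  -- first conclusion: A is null
  obtain ⟨j0, k0, l0, m0, hc0⟩ := hCne
  have main : ∀ j k l m, (∑ i, ∑ p, ginv i p * A i * A p) * C j k l m = 0 := by
    intro j k l m
    have h0 : ∑ i, (∑ p, ginv i p * A p) * (A i * C j k l m + A j * C k i l m + A k * C i j l m) = 0 := by
      apply Finset.sum_eq_zero; intro i _
      rw [hcyc i j k l m, mul_zero]
    have t2 : ∑ i, (∑ p, ginv i p * A p) * (A j * C k i l m) = 0 := by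
      calc ∑ i, (∑ p, ginv i p * A p) * (A j * C k i l m)
          = ∑ i, A j * (∑ p, ginv i p * A p * C l m k i) := by
            apply Finset.sum_congr rfl; intro i _
            rw [hC3 k i l m, Finset.sum_mul, Finset.mul_sum]
            apply Finset.sum_congr rfl; intro p _
            ring
        _ = A j * (∑ i, ∑ p, ginv i p * A p * C l m k i) := by
            rw [Finset.mul_sum]
        _ = 0 := by rw [hF l m k]; ring
    have t3 : ∑ i, (∑ p, ginv i p * A p) * (A k * C i j l m) = 0 := by
      calc ∑ i, (∑ p, ginv i p * A p) * (A k * C i j l m)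
          = ∑ i, A k * -(∑ p, ginv i p * A p * C l m j i) := by
            apply Finset.sum_congr rfl; intro i _
            rw [hC1 i j l m, hC3 j i l m, Finset.sum_mul, ← Finset.sum_neg_distrib, Finset.mul_sum]
            apply Finset.sum_congr rfl; intro p _
            ring
        _ = A k * -(∑ i, ∑ p, ginv i p * A p * C l m j i) := by
            simp [Finset.mul_sum]
        _ = 0 := by rw [hF l m j]; ring
    have hsplit : ∑ i, (∑ p, ginv i p * A p) * (A i * C j k l m + A j * C k i l m + A k * C i j l m)
        = (∑ i, (∑ p, ginv i p * A p) * (A i * C j k l m))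
          + (∑ i, (∑ p, ginv i p * A p) * (A j * C k i l m))
          + (∑ i, (∑ p, ginv i p * A p) * (A k * C i j l m)) := by
      rw [← Finset.sum_add_distrib, ← Finset.sum_add_distrib]
      apply Finset.sum_congr rfl; intro i _
      ring
    rw [hsplit, t2, t3] at h0
    calc (∑ i, ∑ p, ginv i p * A i * A p) * C j k l m
        = ∑ i, (∑ p, ginv i p * A p) * (A i * C j k l m) := by
          rw [Finset.sum_mul]
          apply Finset.sum_congr rfl; intro i _
          rw [Finset.sum_mul, Finset.sum_mul]
          apply Finset.sum_congr rfl; intro p _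
          ring
      _ = 0 := by linarith
  have := main j0 k0 l0 m0
  rcases mul_eq_zero.mp this with h | h
  · exact h
  · exact absurd h hc0
end

section
/- Let C be a Weyl-like tensor (with Weyl symmetries) and A a vector with A_i C_{jklm} + A_j C_{kilm} + A_k C_{ijlm} = 0, C ≠ 0, and let B be a vector with B^i A_i = 1. Then, with E_{kl} = B^i B^m C_{iklm}, one has the representation C_{jklm} = A_j A_m E_{kl} - A_j A_l E_{mk} - A_k A_m E_{jl} + A_k A_l E_{jm}, and E is symmetric with E^k{}_k = 0, A^k E_{kl} = 0, B^k E_{kl} = 0. -/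
/-- Auxiliary: contraction of `B` with the first slot of `C`. -/
def weylD (n : ℕ) (B : Fin n → ℝ) (C : Fin n → Fin n → Fin n → Fin n → ℝ)
    (k l m : Fin n) : ℝ := ∑ i, B i * C i k l m

/-- (Pointwise.) Let `C` be a Weyl-like tensor and `A` a vector with
`AᵢC_{jklm} + AⱼC_{kilm} + A_kC_{ijlm} = 0`, `C ≠ 0`, and `B` a vector with
`B^iAᵢ = 1`.  With `E_{kl} = B^iB^mC_{iklm}` one has the representation
`C_{jklm} = AⱼA_mE_{kl} - AⱼA_lE_{mk} - A_kA_mE_{jl} + A_kA_lE_{jm}`, and `E` is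
symmetric, trace-free, with `A^kE_{kl} = 0` and `B^kE_{kl} = 0`. -/
theorem cyclic_weyl_representation
    (n : ℕ) (hn : 4 ≤ n)
    (g ginv : Fin n → Fin n → ℝ)
    (hgsym : ∀ i j, g i j = g j i)
    (hginv : ∀ i j, ∑ m, g i m * ginv m j = if i = j then (1:ℝ) else 0)
    (C : Fin n → Fin n → Fin n → Fin n → ℝ)
    (hC1 : ∀ j k l m, C j k l m = - C k j l m)
    (hC2 : ∀ j k l m, C j k l m = - C j k m l)
    (hC3 : ∀ j k l m, C j k l m = C l m j k)
    (hCB : ∀ j k l m, C j k l m + C k l j m + C l j k m = 0)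
    (htrace : ∀ k m, ∑ j, ∑ l, ginv j l * C j k l m = 0)
    (hCne : ∃ j k l m, C j k l m ≠ 0)
    (A : Fin n → ℝ)
    (hcyc : ∀ i j k l m,
      A i * C j k l m + A j * C k i l m + A k * C i j l m = 0)
    (B : Fin n → ℝ)  -- contravariant vector with B^iAᵢ = 1
    (hAB : ∑ i, B i * A i = 1)
    (E : Fin n → Fin n → ℝ)
    (hE : ∀ k l, E k l = ∑ i, ∑ m, B i * B m * C i k l m) :
    (∀ j k l m, C j k l m =
      A j * A m * E k l - A j * A l * E m k - A k * A m * E j l + A k * A l * E j m) ∧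
    (∀ k l, E k l = E l k) ∧
    (∑ k, ∑ l, ginv k l * E k l = 0) ∧
    (∀ l, ∑ k, ∑ p, ginv k p * A p * E k l = 0) ∧
    (∀ l, ∑ k, B k * E k l = 0) := by
  classical
  set D : Fin n → Fin n → Fin n → ℝ := weylD n B C with hDset
  have hDeq : ∀ k l m, D k l m = ∑ i, B i * C i k l m := fun _ _ _ => rfl
  -- antisymmetric double contraction vanishes
  have skew : ∀ (v : Fin n → ℝ) (T : Fin n → Fin n → ℝ), (∀ i j, T i j = - T j i) →
      (∑ i, ∑ j, v i * v j * T i j) = 0 := by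
    intro v T hT
    have h : (∑ i, ∑ j, v i * v j * T i j) = - ∑ i, ∑ j, v i * v j * T i j := by
      calc (∑ i, ∑ j, v i * v j * T i j) = ∑ j, ∑ i, v i * v j * T i j := Finset.sum_comm
        _ = ∑ j, ∑ i, -(v j * v i * T j i) := by
            refine Finset.sum_congr rfl fun j _ => Finset.sum_congr rfl fun i _ => ?_
            rw [hT i j]; ring
        _ = - ∑ j, ∑ i, v j * v i * T j i := by
            simp [Finset.sum_neg_distrib]
    linarith
  -- commuting a triple sum
  have comm3 : ∀ (f : Fin n → Fin n → Fin n → ℝ),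
      (∑ a, ∑ b, ∑ c, f a b c) = ∑ c, ∑ a, ∑ b, f a b c := by
    intro f
    calc (∑ a, ∑ b, ∑ c, f a b c) = ∑ a, ∑ c, ∑ b, f a b c :=
          Finset.sum_congr rfl fun a _ => Finset.sum_comm
      _ = ∑ c, ∑ a, ∑ b, f a b c := Finset.sum_comm
  -- linear combination under a double sum
  have lin2 : ∀ (t f p q : Fin n → Fin n → ℝ) (a b : ℝ),
      (∀ x y, t x y = f x y + a * p x y + b * q x y) →
      (∑ x, ∑ y, t x y)
        = (∑ x, ∑ y, f x y) + a * (∑ x, ∑ y, p x y) + b * (∑ x, ∑ y, q x y) := by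
    intro t f p q a b hpt
    have h1 : ∀ x, (∑ y, t x y) = (∑ y, f x y) + a * (∑ y, p x y) + b * (∑ y, q x y) := by
      intro x
      rw [Finset.mul_sum, Finset.mul_sum, ← Finset.sum_add_distrib, ← Finset.sum_add_distrib]
      exact Finset.sum_congr rfl fun y _ => hpt x y
    calc (∑ x, ∑ y, t x y)
        = ∑ x, ((∑ y, f x y) + a * (∑ y, p x y) + b * (∑ y, q x y)) :=
          Finset.sum_congr rfl fun x _ => h1 x
      _ = (∑ x, ∑ y, f x y) + a * (∑ x, ∑ y, p x y) + b * (∑ x, ∑ y, q x y) := by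
          rw [Finset.sum_add_distrib, Finset.sum_add_distrib, ← Finset.mul_sum, ← Finset.mul_sum]
  -- Step 1: C_{jklm} = A_j D_{klm} - A_k D_{jlm}
  have hD1 : ∀ j k l m, C j k l m = A j * D k l m - A k * D j l m := by
    intro j k l m
    have key : (∑ i, B i * (A i * C j k l m + A j * C k i l m + A k * C i j l m))
        = C j k l m - A j * D k l m + A k * D j l m := by
      have h1 : (∑ i, B i * (A i * C j k l m + A j * C k i l m + A k * C i j l m))
          = ∑ i, (B i * A i * C j k l m - A j * (B i * C i k l m)
              + A k * (B i * C i j l m)) :=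
        Finset.sum_congr rfl fun i _ => by rw [hC1 k i l m]; ring
      rw [h1, Finset.sum_add_distrib, Finset.sum_sub_distrib, ← Finset.sum_mul,
        ← Finset.mul_sum, ← Finset.mul_sum, hAB, one_mul, ← hDeq k l m, ← hDeq j l m]
    have hz : (∑ i, B i * (A i * C j k l m + A j * C k i l m + A k * C i j l m)) = 0 :=
      Finset.sum_eq_zero fun i _ => by rw [hcyc i j k l m, mul_zero]
    rw [hz] at key
    linarith
  -- B contracted into middle slot of D gives -E
  have hBD : ∀ a b, (∑ i, B i * D a i b) = -(E a b) := by
    intro a b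
    have h1 : (∑ i, B i * D a i b) = ∑ i, ∑ j, -(B j * B i * C j a b i) := by
      refine Finset.sum_congr rfl fun i _ => ?_
      rw [hDeq, Finset.mul_sum]
      refine Finset.sum_congr rfl fun j _ => ?_
      rw [hC2 j a i b]; ring
    have h2 : (∑ i, ∑ j, -(B j * B i * C j a b i)) = -∑ j, ∑ i, B j * B i * C j a b i := by
      rw [Finset.sum_comm]
      simp [Finset.sum_neg_distrib]
    rw [h1, h2, hE a b]
  -- Step 2: D_{klm} = A_m E_{lk} - A_l E_{mk}
  have hD2 : ∀ k l m, D k l m = A m * E l k - A l * E m k := by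
    intro k l m
    have h1 : D k l m = ∑ i, (A l * (B i * D m i k) - A m * (B i * D l i k)) := by
      rw [hDeq]
      refine Finset.sum_congr rfl fun i _ => ?_
      rw [hC3 i k l m, hD1 l m i k]; ring
    rw [h1, Finset.sum_sub_distrib, ← Finset.mul_sum, ← Finset.mul_sum, hBD, hBD]
    ring
  -- symmetry of E
  have hEsym : ∀ k l, E k l = E l k := by
    intro k l
    have h1 : E k l - E l k = ∑ i, ∑ m, B i * B m * C l k i m := by
      rw [hE, hE, ← Finset.sum_sub_distrib]
      refine Finset.sum_congr rfl fun i _ => ?_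
      rw [← Finset.sum_sub_distrib]
      refine Finset.sum_congr rfl fun m _ => ?_
      linear_combination (-(B i * B m)) * hCB i l k m + (B i * B m) * hC1 k i l m
    have h2 : (∑ i, ∑ m, B i * B m * C l k i m) = 0 :=
      skew B (fun i m => C l k i m) (fun i m => hC2 l k i m)
    linarith
  -- E in terms of D
  have hED : ∀ k l, E k l = ∑ m, B m * D k l m := by
    intro k l
    rw [hE, Finset.sum_comm]
    refine Finset.sum_congr rfl fun m _ => ?_
    rw [hDeq, Finset.mul_sum]
    exact Finset.sum_congr rfl fun i _ => by ring
  -- trace lemmas derived from htrace via the symmetries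
  have Tr2 : ∀ i m, (∑ k, ∑ l, ginv k l * C i k l m) = 0 := by
    intro i m
    have h1 : (∑ k, ∑ l, ginv k l * C i k l m)
        = ∑ k, ∑ l, -(ginv k l * C k i l m) := by
      refine Finset.sum_congr rfl fun k _ => Finset.sum_congr rfl fun l _ => ?_
      rw [hC1 i k l m]; ring
    have h2 : (∑ k, ∑ l, -(ginv k l * C k i l m)) = -∑ k, ∑ l, ginv k l * C k i l m := by
      simp [Finset.sum_neg_distrib]
    rw [h1, h2, htrace i m, neg_zero]
  have TrB : ∀ k m, (∑ q, ∑ p, ginv q p * C k p q m) = 0 := by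
    intro k m
    have h1 : (∑ q, ∑ p, ginv q p * C k p q m)
        = ∑ q, ∑ p, -(ginv q p * C q m p k) := by
      refine Finset.sum_congr rfl fun q _ => Finset.sum_congr rfl fun p _ => ?_
      rw [hC3 k p q m, hC2 q m k p]; ring
    have h2 : (∑ q, ∑ p, -(ginv q p * C q m p k)) = -∑ q, ∑ p, ginv q p * C q m p k := by
      simp [Finset.sum_neg_distrib]
    rw [h1, h2, htrace m k, neg_zero]
  have TrC : ∀ j m, (∑ q, ∑ p, ginv q p * C p j q m) = 0 := by
    intro j m
    have h1 : (∑ q, ∑ p, ginv q p * C p j q m)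
        = ∑ q, ∑ p, ginv q p * C q m p j :=
      Finset.sum_congr rfl fun q _ => Finset.sum_congr rfl fun p _ => by
        rw [hC3 p j q m]
    rw [h1, htrace m j]
  -- contraction of A (raised with ginv) into the third slot of C vanishes
  have Acon : ∀ j k m, (∑ q, ∑ p, ginv q p * A p * C j k q m) = 0 := by
    intro j k m
    have hz : (∑ q, ∑ p, ginv q p * (A p * C j k q m + A j * C k p q m + A k * C p j q m)) = 0 :=
      Finset.sum_eq_zero fun q _ => Finset.sum_eq_zero fun p _ => by
        rw [hcyc p j k q m, mul_zero]
    have hs := lin2 (fun q p => ginv q p * (A p * C j k q m + A j * C k p q m + A k * C p j q m))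
        (fun q p => ginv q p * A p * C j k q m)
        (fun q p => ginv q p * C k p q m)
        (fun q p => ginv q p * C p j q m) (A j) (A k) (fun q p => by ring)
    rw [hz, TrB k m, TrC j m, mul_zero, mul_zero, add_zero, add_zero] at hs
    exact hs.symm
  -- contraction of raised A into the second slot of C vanishes
  have Acon2 : ∀ i l m, (∑ k, ∑ p, ginv k p * A p * C i k l m) = 0 := by
    intro i l m
    have h1 : (∑ k, ∑ p, ginv k p * A p * C i k l m)
        = ∑ k, ∑ p, -(ginv k p * A p * C l m k i) := by
      refine Finset.sum_congr rfl fun k _ => Finset.sum_congr rfl fun p _ => ?_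
      linear_combination (ginv k p * A p) * hC3 i k l m + (ginv k p * A p) * hC2 l m i k
    have h2 : (∑ k, ∑ p, -(ginv k p * A p * C l m k i))
        = -∑ k, ∑ p, ginv k p * A p * C l m k i := by
      simp [Finset.sum_neg_distrib]
    rw [h1, h2, Acon l m i, neg_zero]
  -- raised A contracted into first slot of D vanishes
  have hAD : ∀ l m, (∑ k, ∑ p, ginv k p * A p * D k l m) = 0 := by
    intro l m
    have h1 : (∑ k, ∑ p, ginv k p * A p * D k l m)
        = ∑ k, ∑ p, ∑ i, B i * (ginv k p * A p * C i k l m) := by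
      refine Finset.sum_congr rfl fun k _ => Finset.sum_congr rfl fun p _ => ?_
      rw [hDeq, Finset.mul_sum]
      exact Finset.sum_congr rfl fun i _ => by ring
    have h2 : (∑ k, ∑ p, ∑ i, B i * (ginv k p * A p * C i k l m))
        = ∑ i, ∑ k, ∑ p, B i * (ginv k p * A p * C i k l m) :=
      comm3 (fun k p i => B i * (ginv k p * A p * C i k l m))
    have h3 : ∀ i, (∑ k, ∑ p, B i * (ginv k p * A p * C i k l m))
        = B i * (∑ k, ∑ p, ginv k p * A p * C i k l m) := by
      intro i
      rw [Finset.mul_sum]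
      exact Finset.sum_congr rfl fun k _ => (Finset.mul_sum _ _ _).symm
    rw [h1, h2]
    exact Finset.sum_eq_zero fun i _ => by rw [h3 i, Acon2 i l m, mul_zero]
  -- trace of D over its first two slots vanishes
  have hDtr : ∀ m, (∑ k, ∑ l, ginv k l * D k l m) = 0 := by
    intro m
    have h1 : (∑ k, ∑ l, ginv k l * D k l m)
        = ∑ k, ∑ l, ∑ i, B i * (ginv k l * C i k l m) := by
      refine Finset.sum_congr rfl fun k _ => Finset.sum_congr rfl fun l _ => ?_
      rw [hDeq, Finset.mul_sum]
      exact Finset.sum_congr rfl fun i _ => by ring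
    have h2 : (∑ k, ∑ l, ∑ i, B i * (ginv k l * C i k l m))
        = ∑ i, ∑ k, ∑ l, B i * (ginv k l * C i k l m) :=
      comm3 (fun k l i => B i * (ginv k l * C i k l m))
    have h3 : ∀ i, (∑ k, ∑ l, B i * (ginv k l * C i k l m))
        = B i * (∑ k, ∑ l, ginv k l * C i k l m) := by
      intro i
      rw [Finset.mul_sum]
      exact Finset.sum_congr rfl fun k _ => (Finset.mul_sum _ _ _).symm
    rw [h1, h2]
    exact Finset.sum_eq_zero fun i _ => by rw [h3 i, Tr2 i m, mul_zero]
  -- B contracted into first slot of D vanishes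
  have hBD0 : ∀ l m, (∑ k, B k * D k l m) = 0 := by
    intro l m
    have h1 : (∑ k, B k * D k l m) = ∑ k, ∑ i, B k * B i * C i k l m := by
      refine Finset.sum_congr rfl fun k _ => ?_
      rw [hDeq, Finset.mul_sum]
      exact Finset.sum_congr rfl fun i _ => by ring
    rw [h1]
    exact skew B (fun k i => C i k l m) (fun k i => hC1 i k l m)
  refine ⟨?_, hEsym, ?_, ?_, ?_⟩
  · -- the representation
    intro j k l m
    rw [hD1 j k l m, hD2 k l m, hD2 j l m, hEsym l k, hEsym l j, hEsym m j]
    ring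
  · -- trace-freeness of E
    have h1 : (∑ k, ∑ l, ginv k l * E k l)
        = ∑ k, ∑ l, ∑ m, B m * (ginv k l * D k l m) := by
      refine Finset.sum_congr rfl fun k _ => Finset.sum_congr rfl fun l _ => ?_
      rw [hED k l, Finset.mul_sum]
      exact Finset.sum_congr rfl fun m _ => by ring
    have h2 : (∑ k, ∑ l, ∑ m, B m * (ginv k l * D k l m))
        = ∑ m, ∑ k, ∑ l, B m * (ginv k l * D k l m) :=
      comm3 (fun k l m => B m * (ginv k l * D k l m))
    have h3 : ∀ m, (∑ k, ∑ l, B m * (ginv k l * D k l m))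
        = B m * (∑ k, ∑ l, ginv k l * D k l m) := by
      intro m
      rw [Finset.mul_sum]
      exact Finset.sum_congr rfl fun k _ => (Finset.mul_sum _ _ _).symm
    rw [h1, h2]
    exact Finset.sum_eq_zero fun m _ => by rw [h3 m, hDtr m, mul_zero]
  · -- A^k E_{kl} = 0
    intro l
    have h1 : (∑ k, ∑ p, ginv k p * A p * E k l)
        = ∑ k, ∑ p, ∑ m, B m * (ginv k p * A p * D k l m) := by
      refine Finset.sum_congr rfl fun k _ => Finset.sum_congr rfl fun p _ => ?_
      rw [hED k l, Finset.mul_sum]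
      exact Finset.sum_congr rfl fun m _ => by ring
    have h2 : (∑ k, ∑ p, ∑ m, B m * (ginv k p * A p * D k l m))
        = ∑ m, ∑ k, ∑ p, B m * (ginv k p * A p * D k l m) :=
      comm3 (fun k p m => B m * (ginv k p * A p * D k l m))
    have h3 : ∀ m, (∑ k, ∑ p, B m * (ginv k p * A p * D k l m))
        = B m * (∑ k, ∑ p, ginv k p * A p * D k l m) := by
      intro m
      rw [Finset.mul_sum]
      exact Finset.sum_congr rfl fun k _ => (Finset.mul_sum _ _ _).symm
    rw [h1, h2]
    exact Finset.sum_eq_zero fun m _ => by rw [h3 m, hAD l m, mul_zero]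
  · -- B^k E_{kl} = 0
    intro l
    have h1 : (∑ k, B k * E k l) = ∑ k, ∑ m, B m * (B k * D k l m) := by
      refine Finset.sum_congr rfl fun k _ => ?_
      rw [hED k l, Finset.mul_sum]
      exact Finset.sum_congr rfl fun m _ => by ring
    have h2 : (∑ k, ∑ m, B m * (B k * D k l m))
        = ∑ m, ∑ k, B m * (B k * D k l m) := Finset.sum_comm
    have h3 : ∀ m, (∑ k, B m * (B k * D k l m))
        = B m * (∑ k, B k * D k l m) := fun m => (Finset.mul_sum _ _ _).symm
    rw [h1, h2]
    exact Finset.sum_eq_zero fun m _ => by rw [h3 m, hBD0 l m, mul_zero]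
end

section
/- If a Weyl-like tensor C admits a vector A with A_i C_{jklm} + A_j C_{kilm} + A_k C_{ijlm} = 0 and a vector B with B^iA_i = 1, then the tensor E_{kl} = B^i B^m C_{iklm} is Weyl compatible: E^m{}_i C_{jklm} + E^m{}_j C_{kilm} + E^m{}_k C_{ijlm} = 0. -/
/-- (Pointwise.) With `C` Weyl-like, `A` satisfying the cyclic
condition, `B^iAᵢ = 1`, and `E_{kl} = B^iB^mC_{iklm}`, the tensor `E` is Weyl
compatible: `E^m{}_iC_{jklm} + E^m{}_jC_{kilm} + E^m{}_kC_{ijlm} = 0`. -/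
theorem cyclic_weyl_E_weyl_compatible
    (n : ℕ) (hn : 4 ≤ n)
    (g ginv : Fin n → Fin n → ℝ)
    (hgsym : ∀ i j, g i j = g j i)
    (hginv : ∀ i j, ∑ m, g i m * ginv m j = if i = j then (1:ℝ) else 0)
    (C : Fin n → Fin n → Fin n → Fin n → ℝ)
    (hC1 : ∀ j k l m, C j k l m = - C k j l m)
    (hC2 : ∀ j k l m, C j k l m = - C j k m l)
    (hC3 : ∀ j k l m, C j k l m = C l m j k)
    (hCB : ∀ j k l m, C j k l m + C k l j m + C l j k m = 0)
    (htrace : ∀ k m, ∑ j, ∑ l, ginv j l * C j k l m = 0)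
    (A : Fin n → ℝ)
    (hcyc : ∀ i j k l m,
      A i * C j k l m + A j * C k i l m + A k * C i j l m = 0)
    (B : Fin n → ℝ) (hAB : ∑ i, B i * A i = 1)
    (E : Fin n → Fin n → ℝ)
    (hE : ∀ k l, E k l = ∑ i, ∑ m, B i * B m * C i k l m) :
    ∀ i j k l,
      (∑ m, ∑ p, ginv m p * E p i * C j k l m)
      + (∑ m, ∑ p, ginv m p * E p j * C k i l m)
      + (∑ m, ∑ p, ginv m p * E p k * C i j l m) = 0 := by
  -- ginv is symmetric
  have hginvsym : ∀ i j, ginv i j = ginv j i := by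
    let G : Matrix (Fin n) (Fin n) ℝ := Matrix.of g
    let Gi : Matrix (Fin n) (Fin n) ℝ := Matrix.of ginv
    have h1 : G * Gi = 1 := by
      ext i j
      simp [Matrix.mul_apply, Matrix.one_apply, G, Gi, hginv i j]
    have hGT : G.transpose = G := by
      ext i j; simp [Matrix.transpose_apply, G, hgsym i j]
    have h3 : Gi.transpose = Gi := by
      calc Gi.transpose = Gi.transpose * (G * Gi) := by rw [h1, mul_one]
      _ = (Gi.transpose * G.transpose) * Gi := by rw [← mul_assoc, hGT]
      _ = (G * Gi).transpose * Gi := by rw [Matrix.transpose_mul]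
      _ = Gi := by rw [h1, Matrix.transpose_one, one_mul]
    intro i j
    have := congrFun (congrFun h3 i) j
    simpa [Matrix.transpose_apply, Gi] using this.symm
  -- E is symmetric
  have hEsym : ∀ k l, E k l = E l k := by
    intro k l
    rw [hE, hE, Finset.sum_comm]
    refine Finset.sum_congr rfl fun a _ => Finset.sum_congr rfl fun b _ => ?_
    have e : C a l k b = C b k l a := by
      rw [hC3 a l k b, hC1 k b a l, hC2 b k a l]; ring
    rw [e]; ring
  -- contraction of C with raised A in the third slot vanishes
  have hA3 : ∀ j k m, ∑ l, ∑ p, ginv l p * A p * C j k l m = 0 := by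
    intro j k m
    have step : ∀ l p, ginv l p * A p * C j k l m
        = -(A j * (ginv p l * C k p l m)) - A k * (ginv p l * C p j l m) := by
      intro l p
      linear_combination A p * C j k l m * hginvsym l p + ginv p l * hcyc p j k l m
    have z1 : ∑ l, ∑ p, ginv p l * C k p l m = 0 := by
      have e : ∀ l p, ginv p l * C k p l m = -(ginv p l * C p k l m) := by
        intro l p; rw [hC1 k p l m]; ring
      calc ∑ l, ∑ p, ginv p l * C k p l m
          = -∑ l, ∑ p, ginv p l * C p k l m := by simp_rw [e]; simp
        _ = -∑ p, ∑ l, ginv p l * C p k l m := by rw [Finset.sum_comm]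
        _ = 0 := by rw [htrace k m, neg_zero]
    have z2 : ∑ l, ∑ p, ginv p l * C p j l m = 0 := by
      rw [Finset.sum_comm]; exact htrace j m
    simp_rw [step, Finset.sum_sub_distrib, Finset.sum_neg_distrib, ← Finset.mul_sum]
    rw [z1, z2]; ring
  -- the contraction E^m{}_a A_m vanishes
  have swap24 : ∀ (f : Fin n → Fin n → Fin n → Fin n → ℝ),
      (∑ a, ∑ b, ∑ c, ∑ d, f a b c d) = ∑ c, ∑ d, ∑ a, ∑ b, f a b c d := by
    intro f
    calc (∑ a, ∑ b, ∑ c, ∑ d, f a b c d)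
        = ∑ a, ∑ c, ∑ b, ∑ d, f a b c d :=
          Finset.sum_congr rfl fun a _ => Finset.sum_comm
      _ = ∑ c, ∑ a, ∑ b, ∑ d, f a b c d := Finset.sum_comm
      _ = ∑ c, ∑ a, ∑ d, ∑ b, f a b c d :=
          Finset.sum_congr rfl fun c _ => Finset.sum_congr rfl fun a _ => Finset.sum_comm
      _ = ∑ c, ∑ d, ∑ a, ∑ b, f a b c d :=
          Finset.sum_congr rfl fun c _ => Finset.sum_comm
  have hu : ∀ a, (∑ m, ∑ p, ginv m p * E p a * A m) = 0 := by
    intro a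
    have flat : (∑ m, ∑ p, ginv m p * E p a * A m)
        = ∑ m, ∑ p, ∑ x, ∑ y, B x * B y * (ginv m p * A m * C x p a y) := by
      refine Finset.sum_congr rfl fun m _ => Finset.sum_congr rfl fun p _ => ?_
      rw [hE p a]
      simp only [Finset.mul_sum, Finset.sum_mul]
      exact Finset.sum_congr rfl fun x _ => Finset.sum_congr rfl fun y _ => by ring
    rw [flat, swap24]
    have inner0 : ∀ x y, (∑ m, ∑ p, B x * B y * (ginv m p * A m * C x p a y)) = 0 := by
      intro x y
      have z : (∑ m, ∑ p, ginv m p * A m * C x p a y) = 0 := by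
        have e : ∀ m p, ginv m p * A m * C x p a y
            = -(ginv p m * A m * C a y p x) := by
          intro m p
          rw [hC1 x p a y, hC3 p x a y, hginvsym m p]; ring
        calc (∑ m, ∑ p, ginv m p * A m * C x p a y)
            = -∑ m, ∑ p, ginv p m * A m * C a y p x := by simp_rw [e]; simp
          _ = -∑ p, ∑ m, ginv p m * A m * C a y p x := by rw [Finset.sum_comm]
          _ = 0 := by rw [hA3 a y x, neg_zero]
      simp_rw [← Finset.mul_sum]
      rw [z, mul_zero]
    simp_rw [inner0]
    simp
  -- first contraction with B
  have hrep1 : ∀ j k l m, C j k l m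
      = A j * (∑ i, B i * C i k l m) - A k * (∑ i, B i * C i j l m) := by
    intro j k l m
    have h1 : ∑ i, (B i * (A i * C j k l m) + B i * (A j * C k i l m)
        + B i * (A k * C i j l m)) = 0 := by
      calc ∑ i, (B i * (A i * C j k l m) + B i * (A j * C k i l m)
            + B i * (A k * C i j l m))
          = ∑ _i : Fin n, (0:ℝ) :=
            Finset.sum_congr rfl fun i _ => by linear_combination B i * hcyc i j k l m
        _ = 0 := Finset.sum_const_zero
    rw [Finset.sum_add_distrib, Finset.sum_add_distrib] at h1
    have h2 : ∑ i, B i * (A i * C j k l m) = C j k l m := by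
      have : ∑ i, B i * (A i * C j k l m) = (∑ i, B i * A i) * C j k l m := by
        rw [Finset.sum_mul]
        exact Finset.sum_congr rfl fun i _ => by ring
      rw [this, hAB, one_mul]
    have h3 : ∑ i, B i * (A j * C k i l m) = -(A j * ∑ i, B i * C i k l m) := by
      rw [Finset.mul_sum]
      rw [← Finset.sum_neg_distrib]
      exact Finset.sum_congr rfl fun i _ => by rw [hC1 k i l m]; ring
    have h4 : ∑ i, B i * (A k * C i j l m) = A k * ∑ i, B i * C i j l m := by
      rw [Finset.mul_sum]
      exact Finset.sum_congr rfl fun i _ => by ring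
    rw [h2, h3, h4] at h1
    linarith
  -- named contractions
  set D : Fin n → Fin n → Fin n → ℝ := fun a b c => ∑ i, B i * C i a b c with hDdef
  set H : Fin n → Fin n → ℝ := fun a b => ∑ i, B i * D a i b with hHdef
  set S : Fin n → ℝ := fun b => ∑ m, B m * H m b with hSdef
  have hrep1' : ∀ j k l m, C j k l m = A j * D k l m - A k * D j l m := by
    intro j k l m; rw [hDdef]; exact hrep1 j k l m
  have hrep2 : ∀ k l m, D k l m = A l * H m k - A m * H l k := by
    intro k l m
    calc D k l m = ∑ i, B i * C i k l m := by rw [hDdef]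
      _ = ∑ i, (A l * (B i * D m i k) - A m * (B i * D l i k)) :=
        Finset.sum_congr rfl fun i _ => by
          rw [hC3 i k l m, hrep1' l m i k]; ring
      _ = A l * ∑ i, B i * D m i k - A m * ∑ i, B i * D l i k := by
        rw [Finset.sum_sub_distrib, ← Finset.mul_sum, ← Finset.mul_sum]
      _ = A l * H m k - A m * H l k := by rw [hHdef]
  have hEH : ∀ k l, E k l = A l * S k - H l k := by
    intro k l
    calc E k l = ∑ i, ∑ m, B i * B m * C i k l m := hE k l
      _ = ∑ m, ∑ i, B i * B m * C i k l m := Finset.sum_comm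
      _ = ∑ m, B m * D k l m := by
          refine Finset.sum_congr rfl fun m _ => ?_
          rw [hDdef]
          simp only [Finset.mul_sum]
          exact Finset.sum_congr rfl fun i _ => by ring
      _ = ∑ m, (A l * (B m * H m k) - (B m * A m) * H l k) :=
          Finset.sum_congr rfl fun m _ => by rw [hrep2 k l m]; ring
      _ = A l * ∑ m, B m * H m k - (∑ m, B m * A m) * H l k := by
          rw [Finset.sum_sub_distrib, ← Finset.mul_sum, ← Finset.sum_mul]
      _ = A l * S k - H l k := by
          rw [hSdef, hAB, one_mul]
  have hH : ∀ a b, H a b = A a * S b - E b a := by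
    intro a b; have := hEH b a; linarith
  -- full representation of C in terms of A and E
  have hrepC : ∀ j k l m, C j k l m
      = A j * A m * E k l - A j * A l * E k m + A k * A l * E j m - A k * A m * E j l := by
    intro j k l m
    rw [hrep1' j k l m, hrep2 k l m, hrep2 j l m, hH m k, hH l k, hH m j, hH l j]
    ring
  -- W and its symmetry
  have hWsym : ∀ a b, (∑ m, ∑ p, ginv m p * E p a * E m b)
      = ∑ m, ∑ p, ginv m p * E p b * E m a := by
    intro a b
    rw [Finset.sum_comm]
    refine Finset.sum_congr rfl fun m _ => Finset.sum_congr rfl fun p _ => ?_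
    rw [hginvsym p m]; ring
  intro i j k l
  have hT : ∀ a b c, (∑ m, ∑ p, ginv m p * E p a * C b c l m)
      = A l * A c * (∑ m, ∑ p, ginv m p * E p a * E m b)
        - A l * A b * (∑ m, ∑ p, ginv m p * E p a * E m c) := by
    intro a b c
    have e : ∀ m p, ginv m p * E p a * C b c l m
        = (A b * E c l) * (ginv m p * E p a * A m)
          - (A b * A l) * (ginv m p * E p a * E m c)
          + (A c * A l) * (ginv m p * E p a * E m b)
          - (A c * E b l) * (ginv m p * E p a * A m) := by
      intro m p
      linear_combination (ginv m p * E p a) * hrepC b c l m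
        - (A b * A l * (ginv m p * E p a)) * hEsym c m
        + (A c * A l * (ginv m p * E p a)) * hEsym b m
    simp_rw [e, Finset.sum_sub_distrib, Finset.sum_add_distrib, ← Finset.mul_sum]
    simp only [Finset.sum_sub_distrib, Finset.sum_add_distrib, ← Finset.mul_sum]
    rw [hu a]; ring
  rw [hT i j k, hT j k i, hT k i j, hWsym j i, hWsym k i, hWsym k j]
  ring
end

section
/- If a Weyl-like tensor C admits a vector A with A_i C_{jklm} + A_j C_{kilm} + A_k C_{ijlm} = 0, then C_{lmj}{}^k C_{pqk}{}^j = 0 and C_{lma}{}^b C_{pqb}{}^c C_{rsc}{}^d C_{tud}{}^a = 0; in particular the first Pontryagin form vanishes. -/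
private lemma pull3 {M : Type*} [AddCommMonoid M] {α β γ : Type*}
    [Fintype α] [Fintype β] [Fintype γ] (f : α → β → γ → M) :
    (∑ a, ∑ b, ∑ c, f a b c) = ∑ c, ∑ a, ∑ b, f a b c := by
  calc (∑ a, ∑ b, ∑ c, f a b c) = ∑ a, ∑ c, ∑ b, f a b c :=
        Finset.sum_congr rfl fun a _ => Finset.sum_comm
    _ = ∑ c, ∑ a, ∑ b, f a b c := Finset.sum_comm

/-- (Pointwise.) If a Weyl-like tensor `C` admits a vector `A ≠ 0`
with `AᵢC_{jklm} + AⱼC_{kilm} + A_kC_{ijlm} = 0`, then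
`C_{lmj}{}^k C_{pqk}{}^j = 0` and
`C_{lma}{}^b C_{pqb}{}^c C_{rsc}{}^d C_{tud}{}^a = 0`; in particular the first
Pontryagin form vanishes. -/
theorem cyclic_weyl_pontryagin_vanishes
    (n : ℕ) (hn : 4 ≤ n)
    (g ginv : Fin n → Fin n → ℝ)
    (hgsym : ∀ i j, g i j = g j i)
    (hginv : ∀ i j, ∑ m, g i m * ginv m j = if i = j then (1:ℝ) else 0)
    (C : Fin n → Fin n → Fin n → Fin n → ℝ)
    (hC1 : ∀ j k l m, C j k l m = - C k j l m)
    (hC2 : ∀ j k l m, C j k l m = - C j k m l)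
    (hC3 : ∀ j k l m, C j k l m = C l m j k)
    (hCB : ∀ j k l m, C j k l m + C k l j m + C l j k m = 0)
    (htrace : ∀ k m, ∑ j, ∑ l, ginv j l * C j k l m = 0)
    (A : Fin n → ℝ) (hAne : ∃ i, A i ≠ 0)
    (hcyc : ∀ i j k l m,
      A i * C j k l m + A j * C k i l m + A k * C i j l m = 0) :
    (∀ l m p q,
      ∑ j, ∑ k, ∑ a, ∑ b, ginv k a * ginv j b * C l m j a * C p q k b = 0) ∧
    (∀ l m p q r s t u,
      ∑ a, ∑ b, ∑ c, ∑ e, ∑ a', ∑ b', ∑ c', ∑ e',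
        ginv b a' * ginv c b' * ginv e c' * ginv a e' *
          C l m a a' * C p q b b' * C r s c c' * C t u e e' = 0) ∧
    (∀ X₁ X₂ X₃ X₄ : Fin n → ℝ,
      ∑ l, ∑ m, ∑ p, ∑ q,
        (∑ j, ∑ k, ∑ a, ∑ b, ginv k a * ginv j b * C l m j a * C p q k b) *
          (X₁ l * X₂ m - X₁ m * X₂ l) * (X₃ p * X₄ q - X₃ q * X₄ p) = 0) := by
  classical
  obtain ⟨i₀, hi₀⟩ := hAne
  -- symmetry of the inverse metric
  have hginvsym : ∀ i j, ginv i j = ginv j i := by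
    open Matrix in
    have h1 : (Matrix.of g) * (Matrix.of ginv) = 1 := by
      ext i j
      rw [Matrix.mul_apply, Matrix.one_apply]
      simpa using hginv i j
    have hGT : (Matrix.of g)ᵀ = Matrix.of g := by
      ext i j; exact hgsym j i
    have h2 : (Matrix.of ginv)ᵀ * (Matrix.of g) = 1 := by
      have := congrArg Matrix.transpose h1
      rwa [Matrix.transpose_mul, Matrix.transpose_one, hGT] at this
    have h4 : (Matrix.of ginv)ᵀ = Matrix.of ginv := by
      calc (Matrix.of ginv)ᵀ
          = (Matrix.of ginv)ᵀ * ((Matrix.of g) * (Matrix.of ginv)) := by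
            rw [h1, mul_one]
        _ = ((Matrix.of ginv)ᵀ * (Matrix.of g)) * (Matrix.of ginv) := by
            rw [mul_assoc]
        _ = Matrix.of ginv := by rw [h2, one_mul]
    intro i j
    have := congrFun (congrFun h4 j) i
    simpa [Matrix.transpose_apply] using this
  -- the raised A contracted into the third slot of C vanishes
  have hL3 : ∀ j k m, ∑ i, ∑ l, ginv i l * A i * C j k l m = 0 := by
    intro j k m
    have h2 : ∑ i, ∑ l, ginv i l * (A j * C k i l m) = 0 := by
      have e : ∀ i l : Fin n, ginv i l * (A j * C k i l m)
          = (-A j) * (ginv i l * C i k l m) := by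
        intro i l; rw [hC1 k i l m]; ring
      simp only [e, ← Finset.mul_sum]
      rw [htrace k m]; ring
    have h3 : ∑ i, ∑ l, ginv i l * (A k * C i j l m) = 0 := by
      have e : ∀ i l : Fin n, ginv i l * (A k * C i j l m)
          = A k * (ginv i l * C i j l m) := by
        intro i l; ring
      simp only [e, ← Finset.mul_sum]
      rw [htrace j m]; ring
    have h0 : ∑ i, ∑ l, (ginv i l * A i * C j k l m
        + ginv i l * (A j * C k i l m) + ginv i l * (A k * C i j l m)) = 0 := by
      refine Finset.sum_eq_zero fun i _ => ?_
      refine Finset.sum_eq_zero fun l _ => ?_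
      linear_combination ginv i l * hcyc i j k l m
    simp only [Finset.sum_add_distrib] at h0
    rw [h2, h3, add_zero, add_zero] at h0
    exact h0
  -- the raised A contracted into the fourth slot of C vanishes
  have hL4 : ∀ j k l, ∑ i, ∑ m, ginv i m * A i * C j k l m = 0 := by
    intro j k l
    have e : ∀ i m : Fin n, ginv i m * A i * C j k l m
        = -(ginv i m * A i * C j k m l) := by
      intro i m; rw [hC2 j k l m]; ring
    simp only [e, Finset.sum_neg_distrib]
    rw [hL3 j k l]; ring
  -- variant with contraction on the third slot, flipped ginv
  have hL3' : ∀ p q b, ∑ k, ∑ a, ginv k a * A a * C p q k b = 0 := by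
    intro p q b
    have e : (∑ k, ∑ a, ginv k a * A a * C p q k b)
        = ∑ a, ∑ k, ginv a k * A a * C p q k b := by
      rw [Finset.sum_comm]
      exact Finset.sum_congr rfl fun a _ =>
        Finset.sum_congr rfl fun k _ => by rw [hginvsym k a]
    rw [e]; exact hL3 p q b
  -- cyclic identity moved to the last index pair
  have hcyc' : ∀ i j a l m,
      A i * C l m j a + A j * C l m a i + A a * C l m i j = 0 := by
    intro i j a l m
    have h := hcyc i j a l m
    rw [hC3 j a l m, hC3 a i l m, hC3 i j l m] at h
    exact h
  -- first claim
  have hQ : ∀ l m p q,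
      ∑ j, ∑ k, ∑ a, ∑ b, ginv k a * ginv j b * C l m j a * C p q k b = 0 := by
    intro l m p q
    have hS1 : ∑ j, ∑ k, ∑ a, ∑ b,
        -(A j * C l m a i₀) * (ginv k a * ginv j b * C p q k b) = 0 := by
      rw [Finset.sum_comm]
      refine Finset.sum_eq_zero fun k _ => ?_
      rw [Finset.sum_comm]
      refine Finset.sum_eq_zero fun a _ => ?_
      have e : ∀ j b : Fin n,
          -(A j * C l m a i₀) * (ginv k a * ginv j b * C p q k b)
          = (-(C l m a i₀) * ginv k a) * (ginv j b * A j * C p q k b) := by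
        intro j b; ring
      simp only [e, ← Finset.mul_sum]
      rw [hL4 p q k]; ring
    have hS2 : ∑ j, ∑ k, ∑ a, ∑ b,
        -(A a * C l m i₀ j) * (ginv k a * ginv j b * C p q k b) = 0 := by
      refine Finset.sum_eq_zero fun j _ => ?_
      rw [pull3 (fun k a b =>
        -(A a * C l m i₀ j) * (ginv k a * ginv j b * C p q k b))]
      refine Finset.sum_eq_zero fun b _ => ?_
      have e : ∀ k a : Fin n,
          -(A a * C l m i₀ j) * (ginv k a * ginv j b * C p q k b)
          = (-(C l m i₀ j) * ginv j b) * (ginv k a * A a * C p q k b) := by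
        intro k a; ring
      simp only [e, ← Finset.mul_sum]
      rw [hL3' p q b]; ring
    have key : A i₀ * (∑ j, ∑ k, ∑ a, ∑ b,
        ginv k a * ginv j b * C l m j a * C p q k b) = 0 := by
      have e : ∀ j k a b : Fin n,
          A i₀ * (ginv k a * ginv j b * C l m j a * C p q k b)
          = -(A j * C l m a i₀) * (ginv k a * ginv j b * C p q k b)
            + -(A a * C l m i₀ j) * (ginv k a * ginv j b * C p q k b) := by
        intro j k a b
        linear_combination (ginv k a * ginv j b * C p q k b) * hcyc' i₀ j a l m
      simp only [Finset.mul_sum]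
      simp only [e]
      simp only [Finset.sum_add_distrib]
      rw [hS1, hS2, add_zero]
    rcases mul_eq_zero.mp key with h | h
    · exact absurd h hi₀
    · exact h
  -- second claim
  have hP : ∀ l m p q r s t u,
      ∑ a, ∑ b, ∑ c, ∑ e, ∑ a', ∑ b', ∑ c', ∑ e',
        ginv b a' * ginv c b' * ginv e c' * ginv a e' *
          C l m a a' * C p q b b' * C r s c c' * C t u e e' = 0 := by
    intro l m p q r s t u
    have hT1 : ∑ a, ∑ b, ∑ c, ∑ e, ∑ a', ∑ b', ∑ c', ∑ e',
        -(A a * C l m a' i₀) * (ginv b a' * ginv c b' * ginv e c' * ginv a e' *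
          C p q b b' * C r s c c' * C t u e e') = 0 := by
      rw [Finset.sum_comm]
      refine Finset.sum_eq_zero fun b _ => ?_
      rw [Finset.sum_comm]
      refine Finset.sum_eq_zero fun c _ => ?_
      rw [Finset.sum_comm]
      refine Finset.sum_eq_zero fun e _ => ?_
      rw [Finset.sum_comm]
      refine Finset.sum_eq_zero fun a' _ => ?_
      rw [Finset.sum_comm]
      refine Finset.sum_eq_zero fun b' _ => ?_
      rw [Finset.sum_comm]
      refine Finset.sum_eq_zero fun c' _ => ?_
      have e2 : ∀ a e' : Fin n,
          -(A a * C l m a' i₀) * (ginv b a' * ginv c b' * ginv e c' * ginv a e' *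
            C p q b b' * C r s c c' * C t u e e')
          = (-(C l m a' i₀) * (ginv b a' * ginv c b' * ginv e c' *
              C p q b b' * C r s c c')) * (ginv a e' * A a * C t u e e') := by
        intro a e'; ring
      simp only [e2, ← Finset.mul_sum]
      rw [hL4 t u e]; ring
    have hT2 : ∑ a, ∑ b, ∑ c, ∑ e, ∑ a', ∑ b', ∑ c', ∑ e',
        -(A a' * C l m i₀ a) * (ginv b a' * ginv c b' * ginv e c' * ginv a e' *
          C p q b b' * C r s c c' * C t u e e') = 0 := by
      refine Finset.sum_eq_zero fun a _ => ?_
      rw [Finset.sum_comm]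
      refine Finset.sum_eq_zero fun c _ => ?_
      rw [Finset.sum_comm]
      refine Finset.sum_eq_zero fun e _ => ?_
      rw [pull3 (fun b a' b' => ∑ c', ∑ e',
        -(A a' * C l m i₀ a) * (ginv b a' * ginv c b' * ginv e c' * ginv a e' *
          C p q b b' * C r s c c' * C t u e e'))]
      refine Finset.sum_eq_zero fun b' _ => ?_
      rw [pull3 (fun b a' c' => ∑ e',
        -(A a' * C l m i₀ a) * (ginv b a' * ginv c b' * ginv e c' * ginv a e' *
          C p q b b' * C r s c c' * C t u e e'))]
      refine Finset.sum_eq_zero fun c' _ => ?_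
      rw [pull3 (fun b a' e' =>
        -(A a' * C l m i₀ a) * (ginv b a' * ginv c b' * ginv e c' * ginv a e' *
          C p q b b' * C r s c c' * C t u e e'))]
      refine Finset.sum_eq_zero fun e' _ => ?_
      have e3 : ∀ b a' : Fin n,
          -(A a' * C l m i₀ a) * (ginv b a' * ginv c b' * ginv e c' * ginv a e' *
            C p q b b' * C r s c c' * C t u e e')
          = (-(C l m i₀ a) * (ginv c b' * ginv e c' * ginv a e' *
              C r s c c' * C t u e e')) * (ginv b a' * A a' * C p q b b') := by
        intro b a'; ring
      simp only [e3, ← Finset.mul_sum]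
      rw [hL3' p q b']; ring
    have key : A i₀ * (∑ a, ∑ b, ∑ c, ∑ e, ∑ a', ∑ b', ∑ c', ∑ e',
        ginv b a' * ginv c b' * ginv e c' * ginv a e' *
          C l m a a' * C p q b b' * C r s c c' * C t u e e') = 0 := by
      have e : ∀ a b c e a' b' c' e' : Fin n,
          A i₀ * (ginv b a' * ginv c b' * ginv e c' * ginv a e' *
            C l m a a' * C p q b b' * C r s c c' * C t u e e')
          = -(A a * C l m a' i₀) * (ginv b a' * ginv c b' * ginv e c' * ginv a e' *
              C p q b b' * C r s c c' * C t u e e')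
            + -(A a' * C l m i₀ a) * (ginv b a' * ginv c b' * ginv e c' * ginv a e' *
              C p q b b' * C r s c c' * C t u e e') := by
        intro a b c e a' b' c' e'
        linear_combination (ginv b a' * ginv c b' * ginv e c' * ginv a e' *
          C p q b b' * C r s c c' * C t u e e') * hcyc' i₀ a a' l m
      simp only [Finset.mul_sum]
      simp only [e]
      simp only [Finset.sum_add_distrib]
      rw [hT1, hT2, add_zero]
    rcases mul_eq_zero.mp key with h | h
    · exact absurd h hi₀
    · exact h
  refine ⟨hQ, hP, ?_⟩
  intro X₁ X₂ X₃ X₄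
  refine Finset.sum_eq_zero fun l _ => ?_
  refine Finset.sum_eq_zero fun m _ => ?_
  refine Finset.sum_eq_zero fun p _ => ?_
  refine Finset.sum_eq_zero fun q _ => ?_
  rw [hQ l m p q, zero_mul, zero_mul]
end
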